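/- arXiv:1802.09013 — 8 statements merged into one kernel-verified Lean document; each statement's English description precedes it below -/
import Mathlib

section
/- Let d and n be positive integers and let Ω_d = {e^{2πik/d} : k = 0,1,...,d-1} be the set of d-th roots of unity. For any c_1,...,c_n in ℂ, the average over all tuples ξ = (ξ_1,...,ξ_n) in Ω_d^n satisfies: (1/d^n) Σ_{ξ ∈ Ω_d^n} |c_1ξ_1 + ... + c_nξ_n|^{2d} = Σ_{d_1+...+d_n=d, d_i ≥ 0} (d!/(d_1!···d_n!))² Π_{i=1}^n |c_i|^{2d_i} + Σ_{i ≠ j} conj(c_i)^d (c_j)^d. -/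
/-!
Expanding both `d`-th powers by the multinomial theorem writes `|∑ cᵢ ξᵢ|^{2d}` as a combination
of the monomials `∏ conj(ξᵢ)^{gᵢ} ξᵢ^{fᵢ}` with `∑ gᵢ = ∑ fᵢ = d`. Averaging over `d`-th roots of
unity (where `conj ξ = ξ^{d-1}`) kills every monomial except those with `gᵢ ≡ fᵢ [MOD d]` for all
`i`, and each surviving one averages to `1`. As `0 ≤ gᵢ, fᵢ ≤ d`, this forces either `g = f`,
giving the diagonal sum, or `g = d • eᵢ`, `f = d • eⱼ` with `i ≠ j`, giving `conj(cᵢ)^d cⱼ^d`.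
-/

open scoped BigOperators
open ComplexConjugate

open Finset Polynomial

namespace IsPrimitiveRoot

variable {R : Type*} [CommRing R] [IsDomain R] {ζ : R} {d : ℕ}

theorem nthRootsFinset_one_eq_image [DecidableEq R] (hζ : IsPrimitiveRoot ζ d) :
    nthRootsFinset d (1 : R) = (range d).image (ζ ^ ·) := by
  rw [nthRootsFinset_def, hζ.nthRoots_eq (one_pow d)]
  ext
  simp

theorem sum_nthRootsFinset_pow (hζ : IsPrimitiveRoot ζ d) (m : ℕ) :
    ∑ ξ ∈ nthRootsFinset d (1 : R), ξ ^ m = if d ∣ m then (d : R) else 0 := by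
  classical
  rw [hζ.nthRootsFinset_one_eq_image,
    sum_image fun i hi j hj => hζ.pow_inj (mem_range.1 hi) (mem_range.1 hj)]
  simp_rw [← pow_mul, mul_comm _ m, pow_mul]
  split_ifs with hdm
  · simp [(hζ.pow_eq_one_iff_dvd m).2 hdm]
  · have hne : ζ ^ m - 1 ≠ 0 := sub_ne_zero.2 fun h => hdm ((hζ.pow_eq_one_iff_dvd m).1 h)
    have hgeom : (ζ ^ m - 1) * ∑ i ∈ range d, (ζ ^ m) ^ i = 0 := by
      rw [mul_geom_sum, ← pow_mul, mul_comm, pow_mul, hζ.pow_eq_one, one_pow, sub_self]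
    exact (mul_eq_zero.1 hgeom).resolve_left hne

end IsPrimitiveRoot

namespace Complex

variable {d : ℕ}

theorem conj_eq_pow_pred_of_pow_eq_one {ξ : ℂ} (hξ : ξ ^ d = 1) (hd : d ≠ 0) :
    conj ξ = ξ ^ (d - 1) := by
  rw [← inv_eq_conj (norm_eq_one_of_pow_eq_one hξ hd)]
  refine inv_eq_of_mul_eq_one_right ?_
  rw [← pow_succ', Nat.sub_add_cancel (Nat.one_le_iff_ne_zero.2 hd), hξ]

theorem sum_nthRootsFinset_conj_pow_mul_pow (hd : 0 < d) (a b : ℕ) :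
    ∑ ξ ∈ nthRootsFinset d (1 : ℂ), conj ξ ^ a * ξ ^ b = if a ≡ b [MOD d] then (d : ℂ) else 0 := by
  have hdvd : d ∣ (d - 1) * a + b ↔ a ≡ b [MOD d] := by
    rw [Nat.modEq_iff_dvd, ← Int.natCast_dvd_natCast]
    push_cast [Nat.cast_sub hd]
    rw [show ((d : ℤ) - 1) * a + b = b - a + d * a by ring, dvd_add_left (dvd_mul_right _ _)]
  rw [sum_congr rfl fun ξ hξ => by
      rw [conj_eq_pow_pred_of_pow_eq_one ((mem_nthRootsFinset hd 1).1 hξ) hd.ne', ← pow_mul,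
        ← pow_add],
    (isPrimitiveRoot_exp d hd.ne').sum_nthRootsFinset_pow]
  simp only [hdvd]

theorem sum_piFinset_nthRootsFinset_prod_conj_pow_mul_pow {ι : Type*} [Fintype ι] [DecidableEq ι]
    (hd : 0 < d) (g f : ι → ℕ) :
    ∑ ξ ∈ Fintype.piFinset fun _ : ι => nthRootsFinset d (1 : ℂ), ∏ i, conj (ξ i) ^ g i * ξ i ^ f i
      = if ∀ i, g i ≡ f i [MOD d] then (d : ℂ) ^ Fintype.card ι else 0 := by
  rw [← prod_univ_sum (fun _ => nthRootsFinset d (1 : ℂ)) fun i ξ => conj ξ ^ g i * ξ ^ f i]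
  simp_rw [sum_nthRootsFinset_conj_pow_mul_pow hd, Fintype.prod_ite_zero, prod_const, card_univ]

end Complex

theorem Pi.single_modEq_zero {ι : Type*} [DecidableEq ι] {d : ℕ} (i k : ι) :
    (Pi.single i d : ι → ℕ) k ≡ 0 [MOD d] := by
  rw [Pi.single_apply]
  split_ifs
  · exact Nat.modEq_zero_iff_dvd.2 dvd_rfl
  · rfl

theorem Pi.single_left_injective {ι M : Type*} [DecidableEq ι] [Zero M] {b : M} (hb : b ≠ 0) :
    Function.Injective fun i : ι => (Pi.single i b : ι → M) := fun i j h => by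
  by_contra hij
  simpa [Pi.single_apply, hij, hb] using congrFun h i

namespace Finset

variable {ι : Type*} [Fintype ι] [DecidableEq ι] {d : ℕ} {f g : ι → ℕ}

theorem apply_le_of_mem_piAntidiag_univ (hf : f ∈ piAntidiag univ d) (i : ι) : f i ≤ d :=
  (mem_piAntidiag.1 hf).1 ▸ single_le_sum (fun _ _ => Nat.zero_le _) (mem_univ i)

theorem eq_single_of_mem_piAntidiag_univ (hf : f ∈ piAntidiag univ d) {i : ι} (hi : f i = d) :
    f = Pi.single i d := by
  have hrest : ∑ k ∈ univ.erase i, f k = 0 := by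
    have hsum : ∑ k, f k = d := (mem_piAntidiag.1 hf).1
    have := add_sum_erase univ f (mem_univ i)
    omega
  ext k
  rcases eq_or_ne k i with rfl | hk
  · simp [hi]
  · rw [Pi.single_eq_of_ne hk]
    exact sum_eq_zero_iff.1 hrest k (mem_erase.2 ⟨hk, mem_univ k⟩)

theorem exists_eq_single_of_mem_piAntidiag_univ (hd : 0 < d) (hf : f ∈ piAntidiag univ d)
    (hmod : ∀ i, f i ≡ 0 [MOD d]) : ∃ i, f = Pi.single i d := by
  obtain ⟨i, -, hi⟩ := exists_ne_zero_of_sum_ne_zero ((mem_piAntidiag.1 hf).1.trans_ne hd.ne')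
  have hdi : d ≤ f i := Nat.le_of_dvd (Nat.pos_of_ne_zero hi) (Nat.modEq_zero_iff_dvd.1 (hmod i))
  exact ⟨i, eq_single_of_mem_piAntidiag_univ hf
    ((apply_le_of_mem_piAntidiag_univ hf i).antisymm hdi)⟩

theorem eq_single_and_exists_eq_single_of_modEq (hd : 0 < d) (hg : g ∈ piAntidiag univ d)
    (hf : f ∈ piAntidiag univ d) (hmod : ∀ k, g k ≡ f k [MOD d]) {i : ι} (hi : g i = d) :
    g = Pi.single i d ∧ ∃ j, f = Pi.single j d := by
  have hgi := eq_single_of_mem_piAntidiag_univ hg hi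
  refine ⟨hgi, exists_eq_single_of_mem_piAntidiag_univ hd hf fun k => ?_⟩
  exact (hmod k).symm.trans (hgi ▸ Pi.single_modEq_zero i k)

theorem forall_modEq_iff_of_mem_piAntidiag_univ (hd : 0 < d) (hg : g ∈ piAntidiag univ d)
    (hf : f ∈ piAntidiag univ d) :
    (∀ i, g i ≡ f i [MOD d]) ↔ g = f ∨ ∃ i j, g = Pi.single i d ∧ f = Pi.single j d := by
  refine ⟨fun hmod => ?_, ?_⟩
  · by_cases hgd : ∃ i, g i = d
    · obtain ⟨i, hi⟩ := hgd
      obtain ⟨hgi, j, hfj⟩ := eq_single_and_exists_eq_single_of_modEq hd hg hf hmod hi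
      exact .inr ⟨i, j, hgi, hfj⟩
    by_cases hfd : ∃ j, f j = d
    · obtain ⟨j, hj⟩ := hfd
      obtain ⟨hfj, i, hgi⟩ :=
        eq_single_and_exists_eq_single_of_modEq hd hf hg (fun k => (hmod k).symm) hj
      exact .inr ⟨i, j, hgi, hfj⟩
    simp only [not_exists] at hgd hfd
    exact .inl <| funext fun i => (hmod i).eq_of_lt_of_lt
      ((apply_le_of_mem_piAntidiag_univ hg i).lt_of_ne (hgd i))
      ((apply_le_of_mem_piAntidiag_univ hf i).lt_of_ne (hfd i))
  · rintro (rfl | ⟨i, j, rfl, rfl⟩) k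
    · rfl
    · exact (Pi.single_modEq_zero i k).trans (Pi.single_modEq_zero j k).symm

theorem filter_forall_modEq_and_ne_piAntidiag_univ (hd : 0 < d) :
    (piAntidiag univ d ×ˢ piAntidiag univ d).filter
      (fun p : (ι → ℕ) × (ι → ℕ) => (∀ i, p.1 i ≡ p.2 i [MOD d]) ∧ ¬p.1 = p.2)
        = ((univ : Finset (ι × ι)).filter (fun p => p.1 ≠ p.2)).image
          fun p => (Pi.single p.1 d, Pi.single p.2 d) := by
  have hsingle_mem (i : ι) : Pi.single i d ∈ piAntidiag univ d := by simp
  ext ⟨g, f⟩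
  simp only [mem_filter, mem_product, mem_image, mem_univ, true_and, Prod.mk.injEq, Prod.exists]
  constructor
  · rintro ⟨⟨hg, hf⟩, hmod, hne⟩
    obtain ⟨i, j, rfl, rfl⟩ :=
      ((forall_modEq_iff_of_mem_piAntidiag_univ hd hg hf).1 hmod).resolve_left hne
    exact ⟨i, j, fun hij => hne (hij ▸ rfl), rfl, rfl⟩
  · rintro ⟨i, j, hij, rfl, rfl⟩
    refine ⟨⟨hsingle_mem i, hsingle_mem j⟩, ?_, (Pi.single_left_injective hd.ne').ne hij⟩
    exact (forall_modEq_iff_of_mem_piAntidiag_univ hd (hsingle_mem i) (hsingle_mem j)).2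
      (.inr ⟨i, j, rfl, rfl⟩)

theorem sum_filter_forall_modEq_piAntidiag_univ {M : Type*} [AddCommMonoid M] (hd : 0 < d)
    (F : (ι → ℕ) → (ι → ℕ) → M) :
    ∑ p ∈ (piAntidiag univ d ×ˢ piAntidiag univ d).filter (fun p => ∀ i, p.1 i ≡ p.2 i [MOD d]),
        F p.1 p.2
      = ∑ g ∈ piAntidiag univ d, F g g
        + ∑ p ∈ (univ : Finset (ι × ι)).filter (fun p => p.1 ≠ p.2),
            F (Pi.single p.1 d) (Pi.single p.2 d) := by
  have hdiag : (piAntidiag univ d ×ˢ piAntidiag univ d).filter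
      (fun p : (ι → ℕ) × (ι → ℕ) => (∀ i, p.1 i ≡ p.2 i [MOD d]) ∧ p.1 = p.2)
        = (piAntidiag univ d).diag := by
    ext ⟨g, f⟩
    simp only [mem_filter, mem_product, mem_diag]
    constructor
    · rintro ⟨⟨hg, -⟩, -, rfl⟩
      exact ⟨hg, rfl⟩
    · rintro ⟨hg, rfl⟩
      exact ⟨⟨hg, hg⟩, fun _ => rfl, rfl⟩
  have hsingle_inj := Pi.single_left_injective (ι := ι) hd.ne'
  rw [← sum_filter_add_sum_filter_not _ (fun p => p.1 = p.2), filter_filter, filter_filter, hdiag,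
    filter_forall_modEq_and_ne_piAntidiag_univ hd, sum_diag, sum_image fun p _ q _ h =>
      Prod.ext (hsingle_inj (Prod.mk.inj h).1) (hsingle_inj (Prod.mk.inj h).2)]

end Finset

section Average

variable {ι : Type*} [Fintype ι]

def conjMultinomialCoeff (c : ι → ℂ) (g f : ι → ℕ) : ℂ :=
  Nat.multinomial univ g * Nat.multinomial univ f * ∏ i, conj (c i) ^ g i * c i ^ f i

theorem conjMultinomialCoeff_self (c : ι → ℂ) (g : ι → ℕ) :
    conjMultinomialCoeff c g g
      = (Nat.multinomial univ g : ℂ) ^ 2 * ∏ i, ((‖c i‖ : ℝ) : ℂ) ^ (2 * g i) := by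
  simp_rw [conjMultinomialCoeff, ← mul_pow, Complex.conj_mul', pow_mul, sq]

variable [DecidableEq ι]

theorem conjMultinomialCoeff_single (c : ι → ℂ) (i j : ι) (d : ℕ) :
    conjMultinomialCoeff c (Pi.single i d) (Pi.single j d) = conj (c i) ^ d * c j ^ d := by
  have hprod (a : ι → ℂ) (k : ι) : ∏ x, a x ^ (Pi.single k d : ι → ℕ) x = a k ^ d := by
    simp [Pi.single_apply, pow_ite]
  simp [conjMultinomialCoeff, Nat.multinomial_single, prod_mul_distrib, hprod]

theorem conj_sum_pow_mul_sum_pow (c ξ : ι → ℂ) (d : ℕ) :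
    conj (∑ i, c i * ξ i) ^ d * (∑ i, c i * ξ i) ^ d
      = ∑ g ∈ piAntidiag univ d, ∑ f ∈ piAntidiag univ d,
          conjMultinomialCoeff c g f * ∏ i, conj (ξ i) ^ g i * ξ i ^ f i := by
  simp_rw [map_sum, map_mul, sum_pow_eq_sum_piAntidiag, sum_mul_sum, conjMultinomialCoeff,
    mul_pow, prod_mul_distrib]
  exact sum_congr rfl fun g _ => sum_congr rfl fun f _ => by ring

theorem sum_piFinset_nthRootsFinset_conj_sum_pow_mul_sum_pow {d : ℕ} (hd : 0 < d) (c : ι → ℂ) :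
    ∑ ξ ∈ Fintype.piFinset fun _ : ι => nthRootsFinset d (1 : ℂ),
        conj (∑ i, c i * ξ i) ^ d * (∑ i, c i * ξ i) ^ d
      = (d : ℂ) ^ Fintype.card ι *
          ((∑ g ∈ piAntidiag univ d,
              (Nat.multinomial univ g : ℂ) ^ 2 * ∏ i, ((‖c i‖ : ℝ) : ℂ) ^ (2 * g i))
            + ∑ p ∈ (univ : Finset (ι × ι)).filter (fun p => p.1 ≠ p.2),
                conj (c p.1) ^ d * c p.2 ^ d) := by
  calc _ = ∑ g ∈ piAntidiag univ d, ∑ f ∈ piAntidiag univ d, conjMultinomialCoeff c g f *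
          ∑ ξ ∈ Fintype.piFinset fun _ : ι => nthRootsFinset d (1 : ℂ),
            ∏ i, conj (ξ i) ^ g i * ξ i ^ f i := by
        simp_rw [conj_sum_pow_mul_sum_pow, mul_sum]
        rw [sum_comm]
        exact sum_congr rfl fun g _ => sum_comm
    _ = (d : ℂ) ^ Fintype.card ι * ∑ p ∈ (piAntidiag univ d ×ˢ piAntidiag univ d).filter
          (fun p => ∀ i, p.1 i ≡ p.2 i [MOD d]), conjMultinomialCoeff c p.1 p.2 := by
        simp_rw [Complex.sum_piFinset_nthRootsFinset_prod_conj_pow_mul_pow hd, mul_sum,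
          sum_filter, sum_product, mul_ite, mul_zero, mul_comm]
    _ = _ := by
        simp_rw [sum_filter_forall_modEq_piAntidiag_univ hd, conjMultinomialCoeff_self,
          conjMultinomialCoeff_single]

end Average

theorem stmt2_general (d n : ℕ) (hd : 0 < d) (c : Fin n → ℂ) :
    (1 / (d : ℂ) ^ n) *
      ∑ ξ ∈ Fintype.piFinset (fun _ : Fin n => Polynomial.nthRootsFinset d (1 : ℂ)),
        (conj (∑ i, c i * ξ i)) ^ d * (∑ i, c i * ξ i) ^ d
      = (∑ f ∈ Finset.Nat.antidiagonalTuple n d,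
          (Nat.multinomial Finset.univ f : ℂ) ^ 2
            * ∏ i, ((‖c i‖ : ℝ) : ℂ) ^ (2 * f i))
        + ∑ p ∈ (Finset.univ : Finset (Fin n × Fin n)).filter (fun p => p.1 ≠ p.2),
            (conj (c p.1)) ^ d * (c p.2) ^ d := by
  have hdn : (d : ℂ) ^ n ≠ 0 := pow_ne_zero n (Nat.cast_ne_zero.2 hd.ne')
  rw [sum_piFinset_nthRootsFinset_conj_sum_pow_mul_sum_pow hd, Fintype.card_fin,
    piAntidiag_univ_fin_eq_antidiagonalTuple, one_div, inv_mul_cancel_left₀ hdn]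

/-- Averaging `|c₁ξ₁ + ⋯ + c_nξ_n|^{2d}` over all tuples of `d`-th roots of unity:
`(1/dⁿ) Σ_ξ |Σ_i c_i ξ_i|^{2d}
  = Σ_{d₁+⋯+d_n=d} (d!/(d₁!⋯d_n!))² Π_i |c_i|^{2d_i} + Σ_{i≠j} conj(c_i)^d c_j^d`,
where `|z|^{2d} = conj(z)^d z^d`. -/
theorem stmt2 (d n : ℕ) (hd : 0 < d) (hn : 0 < n) (c : Fin n → ℂ) :
    (1 / (d : ℂ) ^ n) *
      ∑ ξ ∈ Fintype.piFinset (fun _ : Fin n => Polynomial.nthRootsFinset d (1 : ℂ)),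
        (conj (∑ i, c i * ξ i)) ^ d * (∑ i, c i * ξ i) ^ d
      = (∑ f ∈ Finset.Nat.antidiagonalTuple n d,
          (Nat.multinomial Finset.univ f : ℂ) ^ 2
            * ∏ i, ((‖c i‖ : ℝ) : ℂ) ^ (2 * f i))
        + ∑ p ∈ (Finset.univ : Finset (Fin n × Fin n)).filter (fun p => p.1 ≠ p.2),
            (conj (c p.1)) ^ d * (c p.2) ^ d :=
  stmt2_general d n hd c
end

section
/- Let d and n be positive integers and let Ω_{d+1} = {e^{2πik/(d+1)} : k = 0,1,...,d} be the set of (d+1)-st roots of unity. For any c_1,...,c_n in ℂ, the average over all tuples η = (η_1,...,η_n) in Ω_{d+1}^n satisfies: (1/(d+1)^n) Σ_{η ∈ Ω_{d+1}^n} |c_1η_1 + ... + c_nη_n|^{2d} = Σ_{d_1+...+d_n=d, d_i ≥ 0} (d!/(d_1!···d_n!))² Π_{i=1}^n |c_i|^{2d_i}. -/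
open scoped BigOperators
open ComplexConjugate

lemma sum_pow_nthRoots (m : ℕ) (hm : 0 < m) (k : ℕ) :
    ∑ η ∈ Polynomial.nthRootsFinset m (1 : ℂ), η ^ k = if m ∣ k then (m : ℂ) else 0 := by
  classical
  haveI : NeZero m := ⟨hm.ne'⟩
  set ζ : ℂ := Complex.exp (2 * Real.pi * Complex.I / m) with hζdef
  have hζ : IsPrimitiveRoot ζ m := Complex.isPrimitiveRoot_exp m hm.ne'
  have himg : Polynomial.nthRootsFinset m (1 : ℂ) = (Finset.range m).image (ζ ^ ·) := by
    ext x
    rw [Polynomial.mem_nthRootsFinset hm (1 : ℂ), Finset.mem_image]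
    constructor
    · intro hx
      obtain ⟨i, hi, rfl⟩ := hζ.eq_pow_of_pow_eq_one hx
      exact ⟨i, Finset.mem_range.2 hi, rfl⟩
    · rintro ⟨j, hj, rfl⟩
      rw [← pow_mul, mul_comm, pow_mul, hζ.pow_eq_one, one_pow]
  rw [himg, Finset.sum_image (fun i hi j hj h =>
    hζ.pow_inj (Finset.mem_range.1 hi) (Finset.mem_range.1 hj) h)]
  have key : ∀ j, (ζ ^ j) ^ k = (ζ ^ k) ^ j := fun j => by rw [← pow_mul, mul_comm, pow_mul]
  simp_rw [key]
  by_cases hdvd : m ∣ k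
  · rw [if_pos hdvd]
    have h1 : ζ ^ k = 1 := (hζ.pow_eq_one_iff_dvd k).2 hdvd
    simp [h1]
  · rw [if_neg hdvd]
    have h1 : ζ ^ k ≠ 1 := fun h => hdvd ((hζ.pow_eq_one_iff_dvd k).1 h)
    rw [geom_sum_eq h1]
    have h2 : (ζ ^ k) ^ m = 1 := by
      rw [← pow_mul, mul_comm, pow_mul, hζ.pow_eq_one, one_pow]
    rw [h2, sub_self, zero_div]

lemma conj_eq_pow_of_pow_eq_one {d : ℕ} {z : ℂ} (hz : z ^ (d + 1) = 1) :
    conj z = z ^ d := by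
  have habs : ‖z‖ ^ (d + 1) = 1 := by
    rw [← norm_pow, hz, norm_one]
  have habs1 : ‖z‖ = 1 := by
    rcases (pow_eq_one_iff_cases.1 habs) with h | h | ⟨h1, h2⟩
    · omega
    · exact h
    · have h0 := norm_nonneg z
      rw [h1] at h0
      linarith
  have hmc : conj z * z = 1 := by
    rw [mul_comm, Complex.mul_conj, Complex.normSq_eq_norm_sq, habs1]
    norm_num
  have hzd : z ^ d * z = 1 := by
    rw [← pow_succ, hz]
  calc conj z = conj z * (z * z ^ d) := by rw [mul_comm z, hzd, mul_one]
    _ = (conj z * z) * z ^ d := by ring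
    _ = z ^ d := by rw [hmc, one_mul]

lemma dvd_iff_eq_of_le {d a b : ℕ} (ha : a ≤ d) (hb : b ≤ d) :
    (d + 1) ∣ (d * a + b) ↔ a = b := by
  constructor
  · rintro ⟨t, ht⟩
    have h1 : ((d : ℤ) + 1) ∣ ((b : ℤ) - a) := by
      refine ⟨(t : ℤ) - a, ?_⟩
      have := congrArg (Nat.cast : ℕ → ℤ) ht
      push_cast at this ⊢
      linarith
    have h2 : ((b : ℤ) - a) = 0 := by
      refine Int.eq_zero_of_abs_lt_dvd h1 ?_
      rw [abs_lt]
      constructor <;> [linarith [Int.ofNat_le.2 hb]; skip]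
      · omega
    omega
  · rintro rfl
    exact ⟨a, by ring⟩

/-- Averaging `|c₁η₁ + ⋯ + c_nη_n|^{2d}` over all tuples of `(d+1)`-st roots of unity:
`(1/(d+1)ⁿ) Σ_η |Σ_i c_i η_i|^{2d} = Σ_{d₁+⋯+d_n=d} (d!/(d₁!⋯d_n!))² Π_i |c_i|^{2d_i}`,
where `|z|^{2d} = conj(z)^d z^d`. -/
theorem stmt3 (d n : ℕ) (hd : 0 < d) (hn : 0 < n) (c : Fin n → ℂ) :
    (1 / ((d : ℂ) + 1) ^ n) *
      ∑ η ∈ Fintype.piFinset (fun _ : Fin n => Polynomial.nthRootsFinset (d + 1) (1 : ℂ)),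
        (conj (∑ i, c i * η i)) ^ d * (∑ i, c i * η i) ^ d
      = ∑ f ∈ Finset.Nat.antidiagonalTuple n d,
          (Nat.multinomial Finset.univ f : ℂ) ^ 2
            * ∏ i, (‖c i‖ : ℂ) ^ (2 * f i) := by
  classical
  set A := Finset.Nat.antidiagonalTuple n d with hA
  set Ω := Polynomial.nthRootsFinset (d + 1) (1 : ℂ) with hΩ
  set T := Fintype.piFinset (fun _ : Fin n => Ω) with hT
  have hd1 : 0 < d + 1 := Nat.succ_pos d
  have hbound : ∀ f : Fin n → ℕ, f ∈ A → ∀ i, f i ≤ d := by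
    intro f hf i
    rw [hA, Finset.Nat.mem_antidiagonalTuple] at hf
    exact hf ▸ Finset.single_le_sum (fun j _ => Nat.zero_le _) (Finset.mem_univ i)
  have hexp : ∀ (a : Fin n → ℂ), (∑ i, a i) ^ d
      = ∑ f ∈ A, (Nat.multinomial Finset.univ f : ℂ) * ∏ i, a i ^ f i := by
    intro a
    rw [Finset.sum_pow_eq_sum_piAntidiag, hA,
      ← Finset.piAntidiag_univ_fin_eq_antidiagonalTuple d n]
  have key : ∑ η ∈ T, (conj (∑ i, c i * η i)) ^ d * (∑ i, c i * η i) ^ d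
      = ((d : ℂ) + 1) ^ n * ∑ f ∈ A, (Nat.multinomial Finset.univ f : ℂ) ^ 2
          * ∏ i, (‖c i‖ : ℂ) ^ (2 * f i) := by
    have step1 : ∀ η ∈ T, (conj (∑ i, c i * η i)) = ∑ i, conj (c i) * (η i) ^ d := by
      intro η hη
      rw [map_sum]
      refine Finset.sum_congr rfl fun i _ => ?_
      rw [map_mul, conj_eq_pow_of_pow_eq_one
        ((Polynomial.mem_nthRootsFinset hd1 (1 : ℂ)).1 (Fintype.mem_piFinset.1 hη i))]
    calc ∑ η ∈ T, (conj (∑ i, c i * η i)) ^ d * (∑ i, c i * η i) ^ d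
        = ∑ η ∈ T, (∑ f ∈ A, ∑ g ∈ A,
            ((Nat.multinomial Finset.univ f : ℂ) * (Nat.multinomial Finset.univ g : ℂ)
              * (∏ i, conj (c i) ^ f i) * (∏ i, (c i) ^ g i))
              * ∏ i, (η i) ^ (d * f i + g i)) := by
          refine Finset.sum_congr rfl fun η hη => ?_
          rw [step1 η hη, hexp, hexp, Finset.sum_mul_sum]
          refine Finset.sum_congr rfl fun f _ => Finset.sum_congr rfl fun g _ => ?_
          simp_rw [mul_pow, pow_add, ← pow_mul]
          rw [Finset.prod_mul_distrib, Finset.prod_mul_distrib, Finset.prod_mul_distrib]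
          ring
      _ = ∑ f ∈ A, ∑ g ∈ A,
            ((Nat.multinomial Finset.univ f : ℂ) * (Nat.multinomial Finset.univ g : ℂ)
              * (∏ i, conj (c i) ^ f i) * (∏ i, (c i) ^ g i))
              * ∏ i, (if (d + 1) ∣ (d * f i + g i) then ((d : ℂ) + 1) else 0) := by
          rw [Finset.sum_comm]
          refine Finset.sum_congr rfl fun f _ => ?_
          rw [Finset.sum_comm]
          refine Finset.sum_congr rfl fun g _ => ?_
          have hswap : ∑ η ∈ Fintype.piFinset (fun _ : Fin n => Ω),
              ∏ i, (η i) ^ (d * f i + g i)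
              = ∏ i, ∑ x ∈ Ω, x ^ (d * f i + g i) :=
            (Finset.prod_univ_sum (fun _ : Fin n => Ω)
              (fun i (x : ℂ) => x ^ (d * f i + g i))).symm
          rw [← Finset.mul_sum, hT, hswap]
          congr 1
          refine Finset.prod_congr rfl fun i _ => ?_
          rw [hΩ, sum_pow_nthRoots (d + 1) hd1]
          push_cast
          rfl
      _ = ∑ f ∈ A, ((d : ℂ) + 1) ^ n * ((Nat.multinomial Finset.univ f : ℂ) ^ 2
            * ∏ i, (‖c i‖ : ℂ) ^ (2 * f i)) := by
          refine Finset.sum_congr rfl fun f hf => ?_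
          rw [Finset.sum_eq_single_of_mem f hf]
          · rw [sq]
            have hprod : ∏ i, (if (d + 1) ∣ (d * f i + f i) then ((d : ℂ) + 1) else 0)
                = ((d : ℂ) + 1) ^ n := by
              rw [Finset.prod_congr rfl fun i _ => if_pos
                ((dvd_iff_eq_of_le (hbound f hf i) (hbound f hf i)).2 rfl)]
              simp
            rw [hprod]
            have habs : ∀ i : Fin n, conj (c i) ^ f i * (c i) ^ f i
                = (‖c i‖ : ℂ) ^ (2 * f i) := by
              intro i
              rw [mul_comm, ← mul_pow, Complex.mul_conj, Complex.normSq_eq_norm_sq,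
                mul_comm 2, pow_mul]
              norm_cast
              ring
            have hpp : (∏ i, conj (c i) ^ f i) * ∏ i, (c i) ^ f i
                = ∏ i, (‖c i‖ : ℂ) ^ (2 * f i) := by
              rw [← Finset.prod_mul_distrib]
              exact Finset.prod_congr rfl fun i _ => habs i
            rw [← hpp]
            ring
          · intro g hg hgf
            obtain ⟨i, hi⟩ := Function.ne_iff.1 (Ne.symm hgf)
            have : ¬ (d + 1) ∣ (d * f i + g i) := by
              rw [dvd_iff_eq_of_le (hbound f hf i) (hbound g hg i)]
              exact hi
            refine mul_eq_zero_of_right _ (Finset.prod_eq_zero (Finset.mem_univ i) ?_)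
            exact if_neg this
      _ = ((d : ℂ) + 1) ^ n * ∑ f ∈ A, (Nat.multinomial Finset.univ f : ℂ) ^ 2
            * ∏ i, (‖c i‖ : ℂ) ^ (2 * f i) := by
          rw [Finset.mul_sum]
  rw [key, ← mul_assoc, one_div,
    inv_mul_cancel₀ (pow_ne_zero n (Nat.cast_add_one_ne_zero d)), one_mul]
end

section
/- An even-order complex tensor T of order 2d and dimension n is conjugate partial-symmetric if and only if there exist a finite positive integer m, real numbers λ_1,...,λ_m, and vectors a_1,...,a_m in ℂⁿ such that T = Σ_{j=1}^m λ_j conj(a_j)^{⊗d} ⊗ (a_j)^{⊗d}, i.e., T_{i_1...i_{2d}} = Σ_{j=1}^m λ_j Π_{k=1}^d conj((a_j)_{i_k}) Π_{k=d+1}^{2d} (a_j)_{i_k} for all indices. -/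
open scoped BigOperators
open ComplexConjugate
open scoped Real


lemma prod_ite_one_zero {d : ℕ} (p : Fin d → Prop) [DecidablePred p] :
    (∏ k, if p k then (1:ℂ) else 0) = if ∀ k, p k then 1 else 0 := by
  by_cases h : ∀ k, p k
  · simp [h]
  · rw [if_neg h]
    push_neg at h
    obtain ⟨k, hk⟩ := h
    exact Finset.prod_eq_zero (Finset.mem_univ k) (by simp [hk])

lemma sum_pow_card_compl {d : ℕ} (s : Finset (Fin d)) :
    ∑ B ∈ s.powerset, (-1:ℂ)^B.card = if s = ∅ then 1 else 0 := by
  have h := Finset.sum_powerset_neg_one_pow_card (x := s)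
  have : ∑ B ∈ s.powerset, (-1:ℂ)^B.card = ((∑ B ∈ s.powerset, (-1:ℤ)^B.card : ℤ) : ℂ) := by
    push_cast; rfl
  rw [this, h]
  split <;> simp

lemma inner_sign {d : ℕ} (g : Fin d → Fin d) :
    (∑ S : Finset (Fin d), if ∀ k, g k ∈ S then (-1:ℂ)^S.card else 0)
      = if Function.Surjective g then (-1:ℂ)^d else 0 := by
  classical
  set A : Finset (Fin d) := Finset.image g Finset.univ with hA
  have hcond : ∀ S : Finset (Fin d), (∀ k, g k ∈ S) ↔ A ⊆ S := by
    intro S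
    rw [hA, Finset.image_subset_iff]
    simp
  simp only [hcond]
  rw [Finset.sum_ite, Finset.sum_const_zero, add_zero]
  have hbij : ∑ S ∈ Finset.univ.filter (fun S => A ⊆ S), (-1:ℂ)^S.card
      = ∑ B ∈ Aᶜ.powerset, (-1:ℂ)^((A ∪ B).card) := by
    refine Finset.sum_nbij' (fun S => S \ A) (fun B => A ∪ B) ?_ ?_ ?_ ?_ ?_
    · intro S hS
      simp only [Finset.mem_filter] at hS
      simp only [Finset.mem_powerset]
      intro x hx
      simp only [Finset.mem_sdiff] at hx
      simp [Finset.mem_compl, hx.2]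
    · intro B hB
      simp [Finset.mem_filter, Finset.subset_union_left]
    · intro S hS
      simp only [Finset.mem_filter] at hS
      exact Finset.union_sdiff_of_subset hS.2
    · intro B hB
      simp only [Finset.mem_powerset] at hB
      exact Finset.union_sdiff_cancel_left (Finset.disjoint_left.mpr
        (fun x hx hx2 => by have := hB hx2; simp only [Finset.mem_compl] at this; exact this hx))
    · intro S hS
      simp only [Finset.mem_filter] at hS
      rw [Finset.union_sdiff_of_subset hS.2]
  rw [hbij]
  have hcard : ∀ B ∈ Aᶜ.powerset, (-1:ℂ)^((A ∪ B).card) = (-1:ℂ)^A.card * (-1)^B.card := by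
    intro B hB
    simp only [Finset.mem_powerset] at hB
    rw [Finset.card_union_of_disjoint, pow_add]
    exact Finset.disjoint_left.mpr (fun x hx hx2 => by
      have := hB hx2; simp only [Finset.mem_compl] at this; exact this hx)
  rw [Finset.sum_congr rfl hcard, ← Finset.mul_sum, sum_pow_card_compl]
  by_cases hsurj : Function.Surjective g
  · have hAuniv : A = Finset.univ := by
      ext x
      simp only [hA, Finset.mem_image, Finset.mem_univ, iff_true]
      obtain ⟨y, hy⟩ := hsurj x
      exact ⟨y, trivial, hy⟩
    rw [if_pos hsurj, hAuniv]
    simp [Finset.card_univ]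
  · have hAne : ¬ (Aᶜ = ∅) := by
      intro hc
      apply hsurj
      intro x
      have hx : x ∈ A := by
        by_contra hx
        have : x ∈ Aᶜ := Finset.mem_compl.mpr hx
        rw [hc] at this
        exact absurd this (Finset.notMem_empty x)
      rw [hA] at hx
      obtain ⟨y, _, hy⟩ := Finset.mem_image.mp hx
      exact ⟨y, hy⟩
    rw [if_neg hsurj, if_neg hAne, mul_zero]

lemma ryser {d : ℕ} (f : Fin d → Fin d → ℂ) :
    ∑ S : Finset (Fin d), (-1:ℂ)^S.card * ∏ k, ∑ m ∈ S, f k m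
      = (-1:ℂ)^d * ∑ σ : Equiv.Perm (Fin d), ∏ k, f k (σ k) := by
  classical
  have h1 : ∀ S : Finset (Fin d), (∏ k, ∑ m ∈ S, f k m)
      = ∑ g : Fin d → Fin d, if ∀ k, g k ∈ S then ∏ k, f k (g k) else 0 := by
    intro S
    rw [Finset.prod_univ_sum, ← Finset.univ_inter (Fintype.piFinset (fun _ : Fin d => S)),
      ← Finset.sum_ite_mem]
    exact Finset.sum_congr rfl (fun g _ => by simp [Fintype.mem_piFinset])
  simp only [h1, Finset.mul_sum]
  rw [Finset.sum_comm]
  have h3 : ∀ g : Fin d → Fin d,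
      (∑ S : Finset (Fin d), (-1:ℂ)^S.card * if ∀ k, g k ∈ S then ∏ k, f k (g k) else 0)
      = (if Function.Surjective g then (-1:ℂ)^d else 0) * ∏ k, f k (g k) := by
    intro g
    rw [← inner_sign g, Finset.sum_mul]
    exact Finset.sum_congr rfl (fun S _ => by split <;> ring)
  simp only [h3]
  have h4 : ∀ g : Fin d → Fin d,
      (if Function.Surjective g then (-1:ℂ)^d else 0) * ∏ k, f k (g k)
      = if Function.Surjective g then (-1:ℂ)^d * ∏ k, f k (g k) else 0 := by
    intro g; split <;> simp
  simp only [h4]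
  rw [← Finset.sum_filter]
  symm
  refine Finset.sum_bij (fun (σ : Equiv.Perm (Fin d)) _ => (σ : Fin d → Fin d)) ?_ ?_ ?_ ?_
  · intro σ _
    simp only [Finset.mem_filter, Finset.mem_univ, true_and]
    exact σ.surjective
  · intro σ _ τ _ h
    exact Equiv.coe_fn_injective h
  · intro g hg
    simp only [Finset.mem_filter, Finset.mem_univ, true_and] at hg
    have hb : Function.Bijective g := Finite.surjective_iff_bijective.mp hg
    exact ⟨Equiv.ofBijective g hb, Finset.mem_univ _, rfl⟩
  · intro σ _
    rfl


noncomputable def om (N : ℕ) : ℂ := Complex.exp (2 * Real.pi * Complex.I / N)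

lemma om_pow_N (N : ℕ) (hN : 0 < N) : om N ^ N = 1 := by
  rw [om, ← Complex.exp_nat_mul]
  have hNne : (N:ℂ) ≠ 0 := Nat.cast_ne_zero.mpr hN.ne'
  rw [mul_div_assoc', mul_comm, mul_div_assoc, div_self hNne, mul_one, Complex.exp_two_pi_mul_I]

lemma om_pow_eq_one_iff (N : ℕ) (hN : 0 < N) (m : ℕ) : om N ^ m = 1 ↔ (N ∣ m) := by
  have hNne : (N:ℂ) ≠ 0 := Nat.cast_ne_zero.mpr hN.ne'
  have hpi : (2 * (Real.pi:ℂ) * Complex.I) ≠ 0 := by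
    simp [Real.pi_ne_zero, Complex.I_ne_zero]
  rw [om, ← Complex.exp_nat_mul, Complex.exp_eq_one_iff]
  constructor
  · rintro ⟨t, ht⟩
    have ht2 : (m:ℂ) * (2 * Real.pi * Complex.I) = (t * N) * (2 * Real.pi * Complex.I) := by
      field_simp at ht
      linear_combination (2 * (Real.pi:ℂ) * Complex.I) * ht
    have hm : (m:ℂ) = t * N := mul_right_cancel₀ hpi ht2
    have hmz : (m:ℤ) = t * N := by exact_mod_cast hm
    exact Int.natCast_dvd_natCast.mp ⟨t, by linarith⟩
  · rintro ⟨c, rfl⟩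
    refine ⟨c, ?_⟩
    push_cast
    field_simp
lemma sum_om_pow (N : ℕ) (hN : 0 < N) (m : ℕ) :
    ∑ k ∈ Finset.range N, (om N ^ m) ^ k = if N ∣ m then (N:ℂ) else 0 := by
  by_cases h : N ∣ m
  · rw [if_pos h, (om_pow_eq_one_iff N hN m).mpr h]
    simp
  · rw [if_neg h, geom_sum_eq (fun hc => h ((om_pow_eq_one_iff N hN m).mp hc))]
    rw [← pow_mul, mul_comm m N, pow_mul, om_pow_N N hN, one_pow]
    simp

variable {n d : ℕ}

def Fr (n d : ℕ) (a : Fin n → ℂ) : (Fin d → Fin n) → (Fin d → Fin n) → ℂ :=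
  fun i j => (∏ k, conj (a (i k))) * ∏ k, a (j k)

def Gr (n d : ℕ) (x y : Fin n → ℂ) : (Fin d → Fin n) → (Fin d → Fin n) → ℂ :=
  fun i j => (∏ k, conj (x (i k))) * ∏ k, y (j k)

lemma conj_om_pow (d : ℕ) : conj (om (2*d+1)) = om (2*d+1) ^ (2*d) := by
  have hd : 0 < 2*d+1 := by omega
  have h1 : conj (om (2*d+1)) * om (2*d+1) = 1 := by
    rw [om, ← Complex.exp_conj, ← Complex.exp_add]
    have h : conj (2 * (Real.pi:ℂ) * Complex.I / ((2*d+1:ℕ):ℂ))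
        = -(2 * (Real.pi:ℂ) * Complex.I / ((2*d+1:ℕ):ℂ)) := by
      rw [map_div₀, map_mul, map_mul, Complex.conj_I, map_natCast, map_ofNat,
        Complex.conj_ofReal]
      ring
    rw [h, neg_add_cancel, Complex.exp_zero]
  have h2 : om (2*d+1) ^ (2*d) * om (2*d+1) = 1 := by
    rw [← pow_succ]
    exact om_pow_N _ hd
  rw [eq_inv_of_mul_eq_one_left h1, eq_inv_of_mul_eq_one_left h2]

lemma dvd_M_iff (d : ℕ) (A B : Finset (Fin d)) :
    (2*d+1) ∣ ((d+1) + 2*d*(d - A.card) + (d - B.card)) ↔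
      (A = Finset.univ ∧ B = ∅) := by
  have ha : A.card ≤ d := by
    have := Finset.card_le_univ A; simpa using this
  have hb : B.card ≤ d := by
    have := Finset.card_le_univ B; simpa using this
  constructor
  · intro h
    have hz : (2*(d:ℤ)+1) ∣ ((d+1) + 2*d*(d - A.card) + (d - B.card) : ℤ) := by
      have := Int.natCast_dvd_natCast.mpr h
      push_cast [Nat.cast_sub ha, Nat.cast_sub hb] at this ⊢
      convert this using 2
    have hz2 : (2*(d:ℤ)+1) ∣ (1 + A.card + d - B.card : ℤ) := by
      have hdecomp : (1 + A.card + d - B.card : ℤ)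
          = ((d+1) + 2*d*(d - A.card) + (d - B.card) : ℤ)
            - ((d:ℤ) - A.card) * (2*d+1) := by ring
      rw [hdecomp]
      exact dvd_sub hz (Dvd.intro_left _ rfl)
    have hle : (2*(d:ℤ)+1) ≤ (1 + A.card + d - B.card : ℤ) := by
      refine Int.le_of_dvd ?_ hz2
      have : (B.card : ℤ) ≤ d := by exact_mod_cast hb
      omega
    have hcards : A.card = d ∧ B.card = 0 := by
      have h1 : (A.card : ℤ) ≤ d := by exact_mod_cast ha
      have h2 : (B.card : ℤ) ≤ d := by exact_mod_cast hb
      have h3 : (0:ℤ) ≤ A.card := Int.natCast_nonneg _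
      have h4 : (0:ℤ) ≤ B.card := Int.natCast_nonneg _
      constructor <;> [skip; skip] <;> omega
    exact ⟨Finset.eq_univ_of_card A (by simp [hcards.1]), Finset.card_eq_zero.mp hcards.2⟩
  · rintro ⟨rfl, rfl⟩
    simp only [Finset.card_univ, Fintype.card_fin, Finset.card_empty, Nat.sub_self,
      Nat.sub_zero, mul_zero, add_zero]
    exact ⟨1, by omega⟩

lemma key_pointwise (x y : Fin n → ℂ) (i j : Fin d → Fin n) :
    ∑ k ∈ Finset.range (2*d+1), om (2*d+1) ^ (k*(d+1)) * Fr n d (x + om (2*d+1) ^ k • y) i j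
      = (2*d+1 : ℕ) * Gr n d x y i j := by
  classical
  have hNpos : 0 < 2*d+1 := by omega
  set ω := om (2*d+1) with hω
  set C : Finset (Fin d) → ℂ := fun A =>
    (∏ t ∈ A, conj (x (i t))) * ∏ t ∈ Finset.univ \ A, conj (y (i t)) with hC
  set D : Finset (Fin d) → ℂ := fun B =>
    (∏ t ∈ B, x (j t)) * ∏ t ∈ Finset.univ \ B, y (j t) with hD
  set M : Finset (Fin d) → Finset (Fin d) → ℕ :=
    fun A B => (d+1) + 2*d*(d - A.card) + (d - B.card) with hM
  have hconj : conj ω = ω ^ (2*d) := conj_om_pow d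
  have step1 : ∀ k, ω ^ (k*(d+1)) * Fr n d (x + ω ^ k • y) i j
      = ∑ A : Finset (Fin d), ∑ B : Finset (Fin d), (ω ^ (M A B)) ^ k * (C A * D B) := by
    intro k
    have hL : (∏ t, conj ((x + ω ^ k • y) (i t)))
        = ∑ A : Finset (Fin d), (ω^(2*d))^(k*(d - A.card)) * C A := by
      have h0 : ∀ t : Fin d, conj ((x + ω ^ k • y) (i t))
          = conj (x (i t)) + (ω^(2*d))^k * conj (y (i t)) := by
        intro t
        simp only [Pi.add_apply, Pi.smul_apply, smul_eq_mul, map_add, map_mul, map_pow, hconj]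
      rw [Finset.prod_congr rfl (fun t _ => h0 t), Finset.prod_add, ← Finset.powerset_univ]
      refine Finset.sum_congr rfl (fun A hA => ?_)
      rw [Finset.prod_mul_distrib, Finset.prod_const]
      have hcard : (Finset.univ \ A).card = d - A.card := by
        rw [Finset.card_sdiff_of_subset (Finset.subset_univ A), Finset.card_univ, Fintype.card_fin]
      rw [hcard, hC, ← pow_mul]
      ring
    have hR : (∏ t, (x + ω ^ k • y) (j t))
        = ∑ B : Finset (Fin d), ω^(k*(d - B.card)) * D B := by
      have h0 : ∀ t : Fin d, (x + ω ^ k • y) (j t) = x (j t) + ω^k * y (j t) := by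
        intro t; simp
      rw [Finset.prod_congr rfl (fun t _ => h0 t), Finset.prod_add, ← Finset.powerset_univ]
      refine Finset.sum_congr rfl (fun B hB => ?_)
      rw [Finset.prod_mul_distrib, Finset.prod_const]
      have hcard : (Finset.univ \ B).card = d - B.card := by
        rw [Finset.card_sdiff_of_subset (Finset.subset_univ B), Finset.card_univ, Fintype.card_fin]
      rw [hcard, hD, ← pow_mul]
      ring
    rw [Fr, hL, hR, Finset.sum_mul_sum, Finset.mul_sum]
    refine Finset.sum_congr rfl (fun A _ => ?_)
    rw [Finset.mul_sum]
    refine Finset.sum_congr rfl (fun B _ => ?_)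
    have he : k*(d+1) + ((2*d)*(k*(d - A.card)) + k*(d - B.card)) = (M A B) * k := by
      rw [hM]; ring
    rw [show (ω ^ (M A B))^k = ω^(k*(d+1)) * (ω^((2*d)*(k*(d - A.card))) * ω^(k*(d - B.card)))
      from by rw [← pow_mul, ← he, pow_add, pow_add], ← pow_mul]
    ring
  rw [Finset.sum_congr rfl (fun k _ => step1 k), Finset.sum_comm]
  have step2 : ∀ A : Finset (Fin d),
      (∑ k ∈ Finset.range (2*d+1), ∑ B : Finset (Fin d), (ω ^ (M A B)) ^ k * (C A * D B))
      = ∑ B : Finset (Fin d), (if A = Finset.univ ∧ B = ∅ then ((2*d+1:ℕ):ℂ) else 0) * (C A * D B) := by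
    intro A
    rw [Finset.sum_comm]
    refine Finset.sum_congr rfl (fun B _ => ?_)
    rw [← Finset.sum_mul, hω, sum_om_pow _ hNpos]
    congr 1
    rw [hM]
    simp only [dvd_M_iff d A B]
  rw [Finset.sum_congr rfl (fun A _ => step2 A)]
  have step3 : ∀ A B : Finset (Fin d),
      (if A = Finset.univ ∧ B = ∅ then ((2*d+1:ℕ):ℂ) else 0) * (C A * D B)
      = if B = ∅ then (if A = Finset.univ then ((2*d+1:ℕ):ℂ) * (C A * D B) else 0) else 0 := by
    intro A B
    by_cases h1 : A = Finset.univ <;> by_cases h2 : B = ∅ <;> simp [h1, h2]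
  simp only [step3]
  have hinner : ∀ A : Finset (Fin d),
      (∑ B : Finset (Fin d), if B = ∅ then
        (if A = Finset.univ then ((2*d+1:ℕ):ℂ) * (C A * D B) else 0) else 0)
      = if A = Finset.univ then ((2*d+1:ℕ):ℂ) * (C A * D ∅) else 0 :=
    fun A => Fintype.sum_ite_eq' (∅ : Finset (Fin d))
      (fun B => if A = Finset.univ then ((2*d+1:ℕ):ℂ) * (C A * D B) else 0)
  simp only [hinner]
  rw [Fintype.sum_ite_eq' (Finset.univ : Finset (Fin d))
    (fun A => ((2*d+1:ℕ):ℂ) * (C A * D ∅))]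
  rw [hC, hD, Gr]
  simp [Finset.sdiff_self]

lemma Gr_mem (x y : Fin n → ℂ) :
    Gr n d x y ∈ Submodule.span ℂ (Set.range (Fr n d)) := by
  have hNne : ((2*d+1:ℕ):ℂ) ≠ 0 := Nat.cast_ne_zero.mpr (by omega)
  have heq : Gr n d x y = (((2*d+1:ℕ):ℂ))⁻¹ • ∑ k ∈ Finset.range (2*d+1),
      (om (2*d+1) ^ (k*(d+1))) • Fr n d (x + om (2*d+1)^k • y) := by
    funext i j
    simp only [Pi.smul_apply, Finset.sum_apply, smul_eq_mul]
    rw [key_pointwise x y i j, ← mul_assoc, inv_mul_cancel₀ hNne, one_mul]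
  rw [heq]
  exact Submodule.smul_mem _ _ (Submodule.sum_mem _ (fun k _ =>
    Submodule.smul_mem _ _ (Submodule.subset_span ⟨_, rfl⟩)))

noncomputable def qfun (n d : ℕ) (i0 : Fin d → Fin n) : (Fin d → Fin n) → ℂ :=
  fun i => ∑ σ : Equiv.Perm (Fin d), ∏ k, if i k = i0 (σ k) then 1 else 0

noncomputable def wvec (n d : ℕ) (i0 : Fin d → Fin n) (S : Finset (Fin d)) : Fin n → ℂ :=
  fun t => ∑ m ∈ S, if t = i0 m then 1 else 0

lemma wvec_real (i0 : Fin d → Fin n) (S : Finset (Fin d)) (t : Fin n) :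
    conj (wvec n d i0 S t) = wvec n d i0 S t := by
  rw [wvec, map_sum]
  exact Finset.sum_congr rfl (fun m _ => by rw [apply_ite conj, map_one, map_zero])

lemma neg_one_pow_sq (d : ℕ) : (-1:ℂ)^d * (-1:ℂ)^d = 1 := by
  rw [← pow_add]
  exact Even.neg_one_pow ⟨d, rfl⟩

lemma qfun_eq (i0 : Fin d → Fin n) (i : Fin d → Fin n) :
    qfun n d i0 i
      = (-1:ℂ)^d * ∑ S : Finset (Fin d), (-1:ℂ)^S.card * ∏ k, wvec n d i0 S (i k) := by
  have h := ryser (fun k m => if i k = i0 m then (1:ℂ) else 0)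
  have hww : ∀ S : Finset (Fin d), ∀ k, (∑ m ∈ S, if i k = i0 m then (1:ℂ) else 0)
      = wvec n d i0 S (i k) := fun S k => rfl
  simp only [hww] at h
  rw [qfun, h, ← mul_assoc, neg_one_pow_sq, one_mul]

lemma Q_mem (i0 j0 : Fin d → Fin n) :
    (fun i j => qfun n d i0 i * qfun n d j0 j) ∈ Submodule.span ℂ (Set.range (Fr n d)) := by
  classical
  have heq : (fun i j => qfun n d i0 i * qfun n d j0 j)
      = ∑ S : Finset (Fin d), ∑ S' : Finset (Fin d),
          (((-1:ℂ)^d * (-1)^S.card) * ((-1:ℂ)^d * (-1)^S'.card)) •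
            Gr n d (wvec n d i0 S) (wvec n d j0 S') := by
    funext i j
    simp only [Finset.sum_apply, Pi.smul_apply, smul_eq_mul]
    have hGr : ∀ S S' : Finset (Fin d),
        Gr n d (wvec n d i0 S) (wvec n d j0 S') i j
        = (∏ k, wvec n d i0 S (i k)) * ∏ k, wvec n d j0 S' (j k) := by
      intro S S'
      rw [Gr]
      exact congrArg (· * _) (Finset.prod_congr rfl (fun k _ => wvec_real i0 S (i k)))
    simp only [hGr]
    rw [qfun_eq i0 i, qfun_eq j0 j]
    simp only [Finset.mul_sum, Finset.sum_mul]
    rw [Finset.sum_comm]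
    refine Finset.sum_congr rfl (fun S _ => ?_)
    refine Finset.sum_congr rfl (fun S' _ => ?_)
    ring
  rw [heq]
  exact Submodule.sum_mem _ (fun S _ => Submodule.sum_mem _ (fun S' _ =>
    Submodule.smul_mem _ _ (Gr_mem _ _)))

def IsPS' (T : (Fin d → Fin n) → (Fin d → Fin n) → ℂ) : Prop :=
  ∀ (σ τ : Equiv.Perm (Fin d)) (i j : Fin d → Fin n), T (i ∘ σ) (j ∘ τ) = T i j

lemma hq_eq (i0 i : Fin d → Fin n) :
    qfun n d i0 i = ∑ σ : Equiv.Perm (Fin d), (if i0 = i ∘ ⇑σ⁻¹ then (1:ℂ) else 0) := by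
  rw [qfun]
  refine Finset.sum_congr rfl (fun σ _ => ?_)
  rw [prod_ite_one_zero]
  have hiff : (∀ k, i k = i0 (σ k)) ↔ i0 = i ∘ ⇑σ⁻¹ := by
    constructor
    · intro h
      funext m
      have := h (σ⁻¹ m)
      simpa [Function.comp] using this.symm
    · rintro rfl k
      simp [Function.comp]
  exact if_congr hiff rfl rfl

lemma inner1 (i : Fin d → Fin n) (g : (Fin d → Fin n) → ℂ) :
    (∑ i0 : Fin d → Fin n, g i0 * qfun n d i0 i) = ∑ σ : Equiv.Perm (Fin d), g (i ∘ ⇑σ⁻¹) := by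
  simp only [hq_eq, Finset.mul_sum]
  rw [Finset.sum_comm]
  refine Finset.sum_congr rfl (fun σ _ => ?_)
  simp only [mul_ite, mul_one, mul_zero]
  exact Fintype.sum_ite_eq' _ g

lemma PS_expand (T : (Fin d → Fin n) → (Fin d → Fin n) → ℂ) (hT : IsPS' T)
    (i j : Fin d → Fin n) :
    ((Nat.factorial d : ℂ) * (Nat.factorial d : ℂ)) * T i j
      = ∑ i0 : Fin d → Fin n, ∑ j0 : Fin d → Fin n,
          T i0 j0 * (qfun n d i0 i * qfun n d j0 j) := by
  have h1 : ∀ i0 : Fin d → Fin n,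
      (∑ j0 : Fin d → Fin n, T i0 j0 * (qfun n d i0 i * qfun n d j0 j))
      = (∑ j0 : Fin d → Fin n, T i0 j0 * qfun n d j0 j) * qfun n d i0 i := by
    intro i0
    rw [Finset.sum_mul]
    exact Finset.sum_congr rfl (fun j0 _ => by ring)
  simp only [h1]
  have h2 : ∀ i0, (∑ j0 : Fin d → Fin n, T i0 j0 * qfun n d j0 j)
      = ∑ τ : Equiv.Perm (Fin d), T i0 (j ∘ ⇑τ⁻¹) := fun i0 => inner1 j (fun j0 => T i0 j0)
  simp only [h2]
  rw [inner1 i (fun i0 => ∑ τ : Equiv.Perm (Fin d), T i0 (j ∘ ⇑τ⁻¹))]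
  have h3 : ∀ σ τ : Equiv.Perm (Fin d), T (i ∘ ⇑σ⁻¹) (j ∘ ⇑τ⁻¹) = T i j :=
    fun σ τ => hT σ⁻¹ τ⁻¹ i j
  simp only [h3]
  simp [Finset.sum_const, Finset.card_univ, Fintype.card_perm]
  ring

lemma T_mem (T : (Fin d → Fin n) → (Fin d → Fin n) → ℂ) (hT : IsPS' T) :
    T ∈ Submodule.span ℂ (Set.range (Fr n d)) := by
  have hfac : ((Nat.factorial d : ℂ)) ≠ 0 := Nat.cast_ne_zero.mpr (Nat.factorial_ne_zero d)
  have heq : T = (((Nat.factorial d : ℂ)) * (Nat.factorial d : ℂ))⁻¹ •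
      ∑ i0 : Fin d → Fin n, ∑ j0 : Fin d → Fin n,
        T i0 j0 • (fun i j => qfun n d i0 i * qfun n d j0 j) := by
    funext i j
    simp only [Pi.smul_apply, Finset.sum_apply, smul_eq_mul]
    rw [← PS_expand T hT i j, ← mul_assoc, inv_mul_cancel₀ (mul_ne_zero hfac hfac), one_mul]
  rw [heq]
  exact Submodule.smul_mem _ _ (Submodule.sum_mem _ fun i0 _ =>
    Submodule.sum_mem _ fun j0 _ => Submodule.smul_mem _ _ (Q_mem i0 j0))

/-- A complex tensor of order `2d` and dimension `n`, viewed as a map on pairs of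
`d`-tuples of indices, is partial-symmetric (PS) if it is invariant under all
permutations of its first `d` indices and of its last `d` indices. -/
def IsPS {n d : ℕ} (T : (Fin d → Fin n) → (Fin d → Fin n) → ℂ) : Prop :=
  ∀ (σ τ : Equiv.Perm (Fin d)) (i j : Fin d → Fin n), T (i ∘ σ) (j ∘ τ) = T i j

/-- A PS tensor is conjugate partial-symmetric (CPS) if additionally
`T_{i j} = conj (T_{j i})`. -/
def IsCPS {n d : ℕ} (T : (Fin d → Fin n) → (Fin d → Fin n) → ℂ) : Prop :=
  IsPS T ∧ ∀ i j, T i j = conj (T j i)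

/-- `T` is CPS iff `T = Σ_{s=1}^m λ_s conj(a_s)^{⊗d} ⊗ (a_s)^{⊗d}` for some
finite `m > 0`, real `λ_s` and vectors `a_s ∈ ℂⁿ`. -/
theorem stmt4 {n d : ℕ} (T : (Fin d → Fin n) → (Fin d → Fin n) → ℂ) :
    IsCPS T ↔ ∃ (m : ℕ) (_ : 0 < m) (lam : Fin m → ℝ) (a : Fin m → Fin n → ℂ),
      ∀ i j, T i j
        = ∑ s, (lam s : ℂ) * ((∏ k, conj (a s (i k))) * ∏ k, a s (j k)) := by
  constructor
  · rintro ⟨hPS, hH⟩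
    have hmem : T ∈ Submodule.span ℂ (Set.range (Fr n d)) := T_mem T hPS
    rw [Submodule.mem_span_set'] at hmem
    obtain ⟨m, c, g, hsum⟩ := hmem
    choose a ha using fun s => (g s).2
    have hrep : ∀ i j, T i j = ∑ s, c s * Fr n d (a s) i j := by
      intro i j
      rw [← hsum]
      simp only [Finset.sum_apply, Pi.smul_apply, smul_eq_mul, ha]
    have hFr : ∀ (b : Fin n → ℂ) (i j : Fin d → Fin n),
        conj (Fr n d b j i) = Fr n d b i j := by
      intro b i j
      simp only [Fr, map_mul, map_prod, Complex.conj_conj]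
      ring
    have hreal : ∀ i j, T i j = ∑ s, ((c s).re : ℂ) * Fr n d (a s) i j := by
      intro i j
      have h2 : T i j = ∑ s, conj (c s) * Fr n d (a s) i j := by
        rw [hH i j, hrep j i, map_sum]
        refine Finset.sum_congr rfl (fun s _ => ?_)
        rw [map_mul, hFr]
      have h4 : (2:ℂ) * T i j = ∑ s, ((c s + conj (c s)) * Fr n d (a s) i j) := by
        rw [two_mul]
        nth_rewrite 1 [hrep i j]
        nth_rewrite 1 [h2]
        rw [← Finset.sum_add_distrib]
        exact Finset.sum_congr rfl (fun s _ => by ring)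
      have h5 : ∀ s : Fin m, c s + conj (c s) = 2 * ((c s).re : ℂ) := by
        intro s
        rw [Complex.add_conj]
        push_cast
        ring
      simp only [h5] at h4
      have h6 : (2:ℂ) ≠ 0 := two_ne_zero
      calc T i j = (2:ℂ)⁻¹ * ((2:ℂ) * T i j) := by rw [← mul_assoc, inv_mul_cancel₀ h6, one_mul]
        _ = (2:ℂ)⁻¹ * ∑ s, 2 * ((c s).re : ℂ) * Fr n d (a s) i j := by rw [h4]
        _ = ∑ s, ((c s).re : ℂ) * Fr n d (a s) i j := by
            rw [Finset.mul_sum]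
            exact Finset.sum_congr rfl (fun s _ => by ring)
    refine ⟨m+1, Nat.succ_pos m, Fin.cons 0 (fun s => (c s).re),
      Fin.cons (fun _ => 0) a, ?_⟩
    intro i j
    rw [Fin.sum_univ_succ]
    simp only [Fin.cons_zero, Fin.cons_succ, Complex.ofReal_zero, zero_mul, zero_add]
    exact hreal i j
  · rintro ⟨m, hm, lam, a, h⟩
    constructor
    · intro σ τ i j
      rw [h, h]
      refine Finset.sum_congr rfl (fun s _ => ?_)
      congr 1
      congr 1
      · exact Equiv.prod_comp σ (fun k => conj (a s (i k)))
      · exact Equiv.prod_comp τ (fun k => a s (j k))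
    · intro i j
      rw [h, h, map_sum]
      refine Finset.sum_congr rfl (fun s _ => ?_)
      simp only [map_mul, map_prod, Complex.conj_conj, Complex.conj_ofReal]
      ring
end

section
/- An even-order complex tensor T of order 2d and dimension n is partial-symmetric if and only if there exist a finite positive integer m, complex numbers λ_1,...,λ_m, and vectors a_1,...,a_m in ℂⁿ such that T = Σ_{j=1}^m λ_j conj(a_j)^{⊗d} ⊗ (a_j)^{⊗d}, i.e., T_{i_1...i_{2d}} = Σ_{j=1}^m λ_j Π_{k=1}^d conj((a_j)_{i_k}) Π_{k=d+1}^{2d} (a_j)_{i_k} for all indices. -/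
open scoped BigOperators
open ComplexConjugate

open Finset

noncomputable def myOmega (d : ℕ) : ℂ := Complex.exp (2 * Real.pi * Complex.I / (2*d+1))

lemma myOmega_prim (d : ℕ) : IsPrimitiveRoot (myOmega d) (2*d+1) := by
  have := Complex.isPrimitiveRoot_exp (2*d+1) (by omega)
  simpa [myOmega] using this

lemma myOmega_conj (d : ℕ) : conj (myOmega d) = (myOmega d) ^ (2*d) := by
  have h0 : conj (myOmega d) = (myOmega d)⁻¹ := by
    rw [myOmega, ← Complex.exp_conj, ← Complex.exp_neg]
    congr 1
    have : ((2*d+1 : ℕ) : ℂ) = ((2*d+1 : ℕ) : ℝ) := by push_cast; ring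
    rw [map_div₀]
    push_cast
    simp [Complex.conj_I, map_ofNat]
    ring
  have h1 : (myOmega d) * (myOmega d) ^ (2*d) = 1 := by
    have := (myOmega_prim d).pow_eq_one
    rwa [pow_succ'] at this
  have hne : myOmega d ≠ 0 := by
    intro hh; rw [hh] at h1; simp at h1
  rw [h0, eq_comm, ← mul_eq_one_iff_eq_inv₀ hne, eq_comm]
  rw [← pow_succ]
  exact ((myOmega_prim d).pow_eq_one).symm

lemma sum_myOmega_pow (d M : ℕ) :
    ∑ t ∈ Finset.range (2*d+1), (myOmega d) ^ (t * M)
      = if (2*d+1) ∣ M then ((2*d+1 : ℕ) : ℂ) else 0 := by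
  have hprim := myOmega_prim d
  have hrw : ∀ t, (myOmega d) ^ (t*M) = ((myOmega d)^M)^t := fun t => by
    rw [← pow_mul, Nat.mul_comm]
  rw [Finset.sum_congr rfl (fun t _ => hrw t)]
  by_cases h : (2*d+1) ∣ M
  · have h1 : (myOmega d)^M = 1 := (hprim.pow_eq_one_iff_dvd M).mpr h
    simp [h1, h]
  · have hne : (myOmega d)^M ≠ 1 := fun hh => h ((hprim.pow_eq_one_iff_dvd M).mp hh)
    rw [geom_sum_eq hne]
    have hN : ((myOmega d)^M)^(2*d+1) = 1 := by
      rw [← pow_mul, mul_comm, pow_mul, hprim.pow_eq_one, one_pow]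
    rw [hN]
    simp [h]

lemma dvd_iff_aux (d s s' : ℕ) (hs : s ≤ d) (hs' : s' ≤ d) :
    (2*d+1) ∣ (d + 2*d*s + s') ↔ (s = d ∧ s' = 0) := by
  constructor
  · intro h
    have e1 : (2*d+1)*s = 2*d*s + s := by ring
    have e2 : (2*d+1)*(s+1) = 2*d*s + s + 2*d + 1 := by ring
    obtain ⟨k, hk⟩ := h
    have hle : (2*d+1)*s ≤ (2*d+1)*k := by rw [← hk]; linarith
    have hlt : (2*d+1)*k < (2*d+1)*(s+1) := by rw [← hk]; linarith
    have hks : k = s := by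
      have h1 : s ≤ k := Nat.le_of_mul_le_mul_left hle (by omega)
      have h2 : k < s+1 := Nat.lt_of_mul_lt_mul_left hlt
      omega
    rw [hks, e1] at hk
    have : d + s' = s := by linarith
    omega
  · rintro ⟨rfl, rfl⟩
    exact ⟨s, by ring⟩

lemma prod_conj_expand {n d : ℕ} (b c : Fin n → ℂ) (i : Fin d → Fin n) (t : ℕ) :
    (∏ k, conj (c (i k) + (myOmega d)^t * b (i k)))
      = ∑ S ∈ (Finset.univ : Finset (Fin d)).powerset,
          (myOmega d)^(2*d*(t*S.card)) *
            ((∏ k ∈ S, conj (b (i k))) * ∏ k ∈ Finset.univ \ S, conj (c (i k))) := by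
  have h : ∀ k : Fin d, conj (c (i k) + (myOmega d)^t * b (i k))
      = ((myOmega d)^(2*d))^t * conj (b (i k)) + conj (c (i k)) := by
    intro k; rw [map_add, map_mul, map_pow, myOmega_conj]; ring
  rw [Finset.prod_congr rfl (fun k _ => h k), Finset.prod_add]
  refine Finset.sum_congr rfl (fun S _ => ?_)
  rw [Finset.prod_mul_distrib, Finset.prod_const, ← pow_mul, ← pow_mul]
  ring_nf

lemma prod_expand {n d : ℕ} (b c : Fin n → ℂ) (j : Fin d → Fin n) (t : ℕ) :
    (∏ k, (c (j k) + (myOmega d)^t * b (j k)))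
      = ∑ S ∈ (Finset.univ : Finset (Fin d)).powerset,
          (myOmega d)^(t*S.card) *
            ((∏ k ∈ S, b (j k)) * ∏ k ∈ Finset.univ \ S, c (j k)) := by
  have h : ∀ k : Fin d, (c (j k) + (myOmega d)^t * b (j k))
      = (myOmega d)^t * b (j k) + c (j k) := fun k => by ring
  rw [Finset.prod_congr rfl (fun k _ => h k), Finset.prod_add]
  refine Finset.sum_congr rfl (fun S _ => ?_)
  rw [Finset.prod_mul_distrib, Finset.prod_const, ← pow_mul]
  ring

lemma key_expand {n d : ℕ} (b c : Fin n → ℂ) (i j : Fin d → Fin n) :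
    (∏ k, conj (b (i k))) * ∏ k, c (j k)
      = (((2*d+1 : ℕ) : ℂ))⁻¹ * ∑ t ∈ Finset.range (2*d+1),
          (myOmega d)^(t*d) * ((∏ k, conj (c (i k) + (myOmega d)^t * b (i k)))
            * ∏ k, (c (j k) + (myOmega d)^t * b (j k))) := by
  classical
  have hN : ((2*d+1:ℕ):ℂ) ≠ 0 := Nat.cast_ne_zero.mpr (by omega)
  set P : Finset (Fin d) → ℂ :=
    fun S => (∏ k ∈ S, conj (b (i k))) * ∏ k ∈ Finset.univ \ S, conj (c (i k)) with hP
  set Q : Finset (Fin d) → ℂ :=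
    fun S => (∏ k ∈ S, b (j k)) * ∏ k ∈ Finset.univ \ S, c (j k) with hQ
  have step1 : ∀ t ∈ Finset.range (2*d+1),
      (myOmega d)^(t*d) * ((∏ k, conj (c (i k) + (myOmega d)^t * b (i k)))
            * ∏ k, (c (j k) + (myOmega d)^t * b (j k)))
      = ∑ S ∈ (Finset.univ : Finset (Fin d)).powerset,
          ∑ S' ∈ (Finset.univ : Finset (Fin d)).powerset,
            (myOmega d)^(t*(d + 2*d*S.card + S'.card)) * (P S * Q S') := by
    intro t _
    rw [prod_conj_expand, prod_expand, Finset.sum_mul_sum, Finset.mul_sum]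
    refine Finset.sum_congr rfl (fun S _ => ?_)
    rw [Finset.mul_sum]
    refine Finset.sum_congr rfl (fun S' _ => ?_)
    rw [show t*(d + 2*d*S.card + S'.card) = t*d + 2*d*(t*S.card) + t*S'.card from by ring,
      pow_add, pow_add]
    ring
  rw [Finset.sum_congr rfl step1, Finset.sum_comm]
  have step2 : ∀ S ∈ (Finset.univ : Finset (Fin d)).powerset,
      ∑ t ∈ Finset.range (2*d+1), ∑ S' ∈ (Finset.univ : Finset (Fin d)).powerset,
          (myOmega d)^(t*(d + 2*d*S.card + S'.card)) * (P S * Q S')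
      = ∑ S' ∈ (Finset.univ : Finset (Fin d)).powerset,
          (if S = Finset.univ ∧ S' = (∅ : Finset (Fin d)) then ((2*d+1:ℕ):ℂ) else 0)
            * (P S * Q S') := by
    intro S hS
    rw [Finset.sum_comm]
    refine Finset.sum_congr rfl (fun S' hS' => ?_)
    rw [← Finset.sum_mul, sum_myOmega_pow]
    congr 1
    have hcS : S.card ≤ d := by simpa using Finset.card_le_card (Finset.mem_powerset.mp hS)
    have hcS' : S'.card ≤ d := by simpa using Finset.card_le_card (Finset.mem_powerset.mp hS')
    have hiff : (2*d+1) ∣ (d + 2*d*S.card + S'.card) ↔ (S = Finset.univ ∧ S' = (∅ : Finset (Fin d))) := by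
      rw [dvd_iff_aux d _ _ hcS hcS']
      constructor
      · rintro ⟨h1, h2⟩
        exact ⟨(Finset.card_eq_iff_eq_univ S).mp (by simpa using h1), Finset.card_eq_zero.mp h2⟩
      · rintro ⟨rfl, rfl⟩
        simp
    exact if_congr hiff rfl rfl
  rw [Finset.sum_congr rfl step2]
  have step3 : ∑ S ∈ (Finset.univ : Finset (Fin d)).powerset,
      ∑ S' ∈ (Finset.univ : Finset (Fin d)).powerset,
          (if S = Finset.univ ∧ S' = (∅ : Finset (Fin d)) then ((2*d+1:ℕ):ℂ) else 0)
            * (P S * Q S')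
      = ((2*d+1:ℕ):ℂ) * (P Finset.univ * Q ∅) := by
    rw [Finset.sum_eq_single_of_mem (Finset.univ : Finset (Fin d))
        (Finset.mem_powerset_self _)]
    · rw [Finset.sum_eq_single_of_mem (∅ : Finset (Fin d)) (by simp)]
      · simp
      · intro S' _ hS'; simp [hS']
    · intro S _ hS
      apply Finset.sum_eq_zero
      intro S' _
      simp [hS]
  rw [step3, hP, hQ]
  simp only [Finset.sdiff_self, Finset.sdiff_empty, Finset.prod_empty, mul_one, one_mul]
  rw [← mul_assoc, inv_mul_cancel₀ hN, one_mul]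

lemma inner_ie {d : ℕ} (p : Fin d → Fin d) :
    ∑ S : Finset (Fin d), (-1:ℂ)^(d - S.card) * ∏ k, (if p k ∈ S then (1:ℂ) else 0)
      = ∑ σ : Equiv.Perm (Fin d), (if p = ⇑σ then (1:ℂ) else 0) := by
  classical
  set R : Finset (Fin d) := Finset.image p Finset.univ with hR
  have hprod : ∀ S : Finset (Fin d), (∏ k, (if p k ∈ S then (1:ℂ) else 0))
      = if R ⊆ S then 1 else 0 := by
    intro S
    by_cases h : R ⊆ S
    · rw [if_pos h]
      apply Finset.prod_eq_one
      intro k _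
      exact if_pos (h (Finset.mem_image_of_mem p (Finset.mem_univ k)))
    · rw [if_neg h]
      obtain ⟨v, hv1, hv2⟩ : ∃ v ∈ R, v ∉ S := by
        by_contra hc; push_neg at hc; exact h hc
      obtain ⟨k, _, rfl⟩ := Finset.mem_image.mp hv1
      exact Finset.prod_eq_zero (Finset.mem_univ k) (if_neg hv2)
  have hLHS : ∑ S : Finset (Fin d), (-1:ℂ)^(d - S.card) * ∏ k, (if p k ∈ S then (1:ℂ) else 0)
      = if Rᶜ = ∅ then 1 else 0 := by
    calc ∑ S : Finset (Fin d), (-1:ℂ)^(d - S.card) * ∏ k, (if p k ∈ S then (1:ℂ) else 0)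
        = ∑ S : Finset (Fin d), (if R ⊆ S then (-1:ℂ)^(d - S.card) else 0) := by
          refine Finset.sum_congr rfl (fun S _ => ?_)
          rw [hprod]
          split_ifs <;> ring
      _ = ∑ S ∈ Finset.univ.filter (fun S => R ⊆ S), (-1:ℂ)^(d - S.card) :=
          (Finset.sum_filter _ _).symm
      _ = ∑ T ∈ Rᶜ.powerset, (-1:ℂ)^T.card := by
          refine Finset.sum_bij' (fun S _ => Sᶜ) (fun T _ => Tᶜ) ?_ ?_ ?_ ?_ ?_
          · intro S hS
            rw [Finset.mem_powerset]
            exact Finset.compl_subset_compl.mpr ((Finset.mem_filter.mp hS).2)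
          · intro T hT
            rw [Finset.mem_filter]
            refine ⟨Finset.mem_univ _, ?_⟩
            have := Finset.compl_subset_compl.mpr (Finset.mem_powerset.mp hT)
            simpa using this
          · intro S _; simp
          · intro T _; simp
          · intro S _
            congr 1
            rw [Finset.card_compl]
            simp
      _ = (((∑ T ∈ Rᶜ.powerset, (-1:ℤ)^T.card : ℤ)) : ℂ) := by push_cast; rfl
      _ = if Rᶜ = ∅ then 1 else 0 := by
          rw [Finset.sum_powerset_neg_one_pow_card]
          split_ifs <;> simp
  rw [hLHS]
  by_cases hb : Function.Bijective p
  · have hsurj : Rᶜ = ∅ := by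
      rw [Finset.compl_eq_empty_iff, Finset.eq_univ_iff_forall]
      intro v
      obtain ⟨k, hk⟩ := hb.2 v
      exact Finset.mem_image.mpr ⟨k, Finset.mem_univ k, hk⟩
    rw [if_pos hsurj]
    have := Equiv.ofBijective p hb
    rw [Finset.sum_eq_single_of_mem (Equiv.ofBijective p hb) (Finset.mem_univ _)]
    · rw [if_pos]; rfl
    · intro σ _ hσ
      rw [if_neg]
      intro hps
      apply hσ
      apply Equiv.ext
      intro x
      have : ⇑(Equiv.ofBijective p hb) = p := rfl
      rw [← hps, this]
  · have hne : ¬ (Rᶜ = ∅) := by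
      rw [Finset.compl_eq_empty_iff]
      intro hu
      apply hb
      have hsurj : Function.Surjective p := by
        intro v
        have : v ∈ R := hu ▸ Finset.mem_univ v
        obtain ⟨k, _, hk⟩ := Finset.mem_image.mp this
        exact ⟨k, hk⟩
      exact ⟨Finite.injective_iff_surjective.mpr hsurj, hsurj⟩
    rw [if_neg hne]
    symm
    apply Finset.sum_eq_zero
    intro σ _
    rw [if_neg]
    intro hps
    exact hb (hps ▸ σ.bijective)

noncomputable def Yv {n d : ℕ} (α : Fin d → Fin n) (S : Finset (Fin d)) : Fin n → ℂ :=
  fun v => ∑ l ∈ S, (if v = α l then 1 else 0)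

lemma Yv_conj {n d : ℕ} (α : Fin d → Fin n) (S : Finset (Fin d)) (v : Fin n) :
    conj (Yv α S v) = Yv α S v := by
  simp only [Yv, map_sum, apply_ite conj, map_one, map_zero]

lemma polar {n d : ℕ} (α i : Fin d → Fin n) :
    ∑ S : Finset (Fin d), (-1:ℂ)^(d - S.card) * ∏ k, Yv α S (i k)
      = ∑ σ : Equiv.Perm (Fin d), ∏ k, (if i k = α (σ k) then (1:ℂ) else 0) := by
  classical
  have h1 : ∀ S : Finset (Fin d), (∏ k, Yv α S (i k))
      = ∑ p : Fin d → Fin d,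
          ∏ k, (if p k ∈ S then (if i k = α (p k) then (1:ℂ) else 0) else 0) := by
    intro S
    have : ∀ k, Yv α S (i k)
        = ∑ l : Fin d, (if l ∈ S then (if i k = α l then (1:ℂ) else 0) else 0) := by
      intro k
      rw [Yv, eq_comm]
      rw [Finset.sum_ite_mem]
      simp
    rw [Finset.prod_congr rfl (fun k _ => this k), Finset.prod_univ_sum]
    rw [← Fintype.piFinset_univ]
  have h2 : ∀ S : Finset (Fin d), ∀ p : Fin d → Fin d,
      (∏ k, (if p k ∈ S then (if i k = α (p k) then (1:ℂ) else 0) else 0))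
      = (∏ k, (if i k = α (p k) then (1:ℂ) else 0)) * ∏ k, (if p k ∈ S then (1:ℂ) else 0) := by
    intro S p
    rw [← Finset.prod_mul_distrib]
    refine Finset.prod_congr rfl (fun k _ => ?_)
    split_ifs <;> ring
  calc ∑ S : Finset (Fin d), (-1:ℂ)^(d - S.card) * ∏ k, Yv α S (i k)
      = ∑ S : Finset (Fin d), ∑ p : Fin d → Fin d,
          (∏ k, (if i k = α (p k) then (1:ℂ) else 0)) *
            ((-1:ℂ)^(d - S.card) * ∏ k, (if p k ∈ S then (1:ℂ) else 0)) := by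
        refine Finset.sum_congr rfl (fun S _ => ?_)
        rw [h1, Finset.mul_sum]
        refine Finset.sum_congr rfl (fun p _ => ?_)
        rw [h2]
        ring
    _ = ∑ p : Fin d → Fin d, (∏ k, (if i k = α (p k) then (1:ℂ) else 0)) *
          (∑ S : Finset (Fin d), (-1:ℂ)^(d - S.card) * ∏ k, (if p k ∈ S then (1:ℂ) else 0)) := by
        rw [Finset.sum_comm]
        exact Finset.sum_congr rfl (fun p _ => (Finset.mul_sum _ _ _).symm)
    _ = ∑ p : Fin d → Fin d, ∑ σ : Equiv.Perm (Fin d),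
          (if p = ⇑σ then (1:ℂ) else 0) * (∏ k, (if i k = α (p k) then (1:ℂ) else 0)) := by
        refine Finset.sum_congr rfl (fun p _ => ?_)
        rw [inner_ie, Finset.mul_sum]
        exact Finset.sum_congr rfl (fun σ _ => by ring)
    _ = ∑ σ : Equiv.Perm (Fin d), ∏ k, (if i k = α (σ k) then (1:ℂ) else 0) := by
        rw [Finset.sum_comm]
        refine Finset.sum_congr rfl (fun σ _ => ?_)
        rw [Finset.sum_eq_single_of_mem (⇑σ) (Finset.mem_univ _)]
        · simp
        · intro p _ hp
          rw [if_neg hp, zero_mul]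

lemma prod_chi {n d : ℕ} (α i : Fin d → Fin n) (σ : Equiv.Perm (Fin d)) :
    (∏ k, (if i k = α (σ k) then (1:ℂ) else 0))
      = if α = i ∘ ⇑σ⁻¹ then (1:ℂ) else 0 := by
  by_cases h : α = i ∘ ⇑σ⁻¹
  · rw [if_pos h]
    apply Finset.prod_eq_one
    intro k _
    rw [if_pos]
    rw [h]
    simp
  · rw [if_neg h]
    have : ∃ l, α l ≠ i (σ⁻¹ l) := by
      by_contra hc
      push_neg at hc
      exact h (funext fun l => hc l)
    obtain ⟨l, hl⟩ := this
    refine Finset.prod_eq_zero (Finset.mem_univ (σ⁻¹ l)) ?_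
    rw [if_neg]
    intro hc
    apply hl
    rw [hc]
    congr 1
    simp

lemma collapse1 {n d : ℕ} (g : (Fin d → Fin n) → ℂ) (w : Fin d → Fin n) :
    ∑ x : Fin d → Fin n, g x *
        (∑ σ : Equiv.Perm (Fin d), ∏ k, (if w k = x (σ k) then (1:ℂ) else 0))
      = ∑ σ : Equiv.Perm (Fin d), g (w ∘ ⇑σ⁻¹) := by
  classical
  calc ∑ x : Fin d → Fin n, g x *
        (∑ σ : Equiv.Perm (Fin d), ∏ k, (if w k = x (σ k) then (1:ℂ) else 0))
      = ∑ x : Fin d → Fin n, ∑ σ : Equiv.Perm (Fin d),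
          (if x = w ∘ ⇑σ⁻¹ then (1:ℂ) else 0) * g x := by
        refine Finset.sum_congr rfl (fun x _ => ?_)
        rw [Finset.mul_sum]
        refine Finset.sum_congr rfl (fun σ _ => ?_)
        rw [prod_chi x w σ]
        ring
    _ = ∑ σ : Equiv.Perm (Fin d), ∑ x : Fin d → Fin n,
          (if x = w ∘ ⇑σ⁻¹ then (1:ℂ) else 0) * g x := Finset.sum_comm
    _ = ∑ σ : Equiv.Perm (Fin d), g (w ∘ ⇑σ⁻¹) := by
        refine Finset.sum_congr rfl (fun σ _ => ?_)
        rw [Finset.sum_eq_single_of_mem (w ∘ ⇑σ⁻¹) (Finset.mem_univ _)]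
        · simp
        · intro x _ hx
          rw [if_neg hx, zero_mul]

lemma master {n d : ℕ} (T : (Fin d → Fin n) → (Fin d → Fin n) → ℂ) (hT : IsPS T)
    (i j : Fin d → Fin n) :
    ∑ α : Fin d → Fin n, ∑ β : Fin d → Fin n, T α β *
        ((∑ S : Finset (Fin d), (-1:ℂ)^(d - S.card) * ∏ k, Yv α S (i k)) *
         (∑ S' : Finset (Fin d), (-1:ℂ)^(d - S'.card) * ∏ k, Yv β S' (j k)))
      = ((d.factorial : ℕ) : ℂ) * ((d.factorial : ℕ) : ℂ) * T i j := by
  classical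
  calc ∑ α : Fin d → Fin n, ∑ β : Fin d → Fin n, T α β *
        ((∑ S : Finset (Fin d), (-1:ℂ)^(d - S.card) * ∏ k, Yv α S (i k)) *
         (∑ S' : Finset (Fin d), (-1:ℂ)^(d - S'.card) * ∏ k, Yv β S' (j k)))
      = ∑ α : Fin d → Fin n,
          (∑ β : Fin d → Fin n, T α β *
            (∑ τ : Equiv.Perm (Fin d), ∏ k, (if j k = β (τ k) then (1:ℂ) else 0))) *
          (∑ σ : Equiv.Perm (Fin d), ∏ k, (if i k = α (σ k) then (1:ℂ) else 0)) := by
        refine Finset.sum_congr rfl (fun α _ => ?_)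
        rw [Finset.sum_mul]
        refine Finset.sum_congr rfl (fun β _ => ?_)
        rw [polar α i, polar β j]
        ring
    _ = ∑ α : Fin d → Fin n,
          (∑ τ : Equiv.Perm (Fin d), T α (j ∘ ⇑τ⁻¹)) *
          (∑ σ : Equiv.Perm (Fin d), ∏ k, (if i k = α (σ k) then (1:ℂ) else 0)) := by
        refine Finset.sum_congr rfl (fun α _ => ?_)
        rw [collapse1 (T α) j]
    _ = ∑ σ : Equiv.Perm (Fin d), ∑ τ : Equiv.Perm (Fin d), T (i ∘ ⇑σ⁻¹) (j ∘ ⇑τ⁻¹) :=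
        collapse1 (fun α => ∑ τ : Equiv.Perm (Fin d), T α (j ∘ ⇑τ⁻¹)) i
    _ = ∑ σ : Equiv.Perm (Fin d), ∑ τ : Equiv.Perm (Fin d), T i j := by
        refine Finset.sum_congr rfl (fun σ _ => Finset.sum_congr rfl (fun τ _ => ?_))
        exact hT σ⁻¹ τ⁻¹ i j
    _ = ((d.factorial : ℕ) : ℂ) * ((d.factorial : ℕ) : ℂ) * T i j := by
        rw [Finset.sum_const, Finset.sum_const, Finset.card_univ, Fintype.card_perm,
          Fintype.card_fin, nsmul_eq_mul, nsmul_eq_mul]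
        ring

lemma master2 {n d : ℕ} (T : (Fin d → Fin n) → (Fin d → Fin n) → ℂ) (hT : IsPS T)
    (i j : Fin d → Fin n) :
    T i j = ∑ x : (Fin d → Fin n) × (Fin d → Fin n) × Finset (Fin d) × Finset (Fin d) ×
        Fin (2*d+1),
      ((((d.factorial : ℕ)) : ℂ)⁻¹ * ((((d.factorial : ℕ)) : ℂ)⁻¹ * ((((2*d+1 : ℕ)) : ℂ)⁻¹ *
          (T x.1 x.2.1 * ((-1:ℂ)^(d - x.2.2.1.card) * ((-1:ℂ)^(d - x.2.2.2.1.card) *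
          (myOmega d)^((x.2.2.2.2 : ℕ) * d)))))) *
        ((∏ k, conj (Yv x.2.1 x.2.2.2.1 (i k) + (myOmega d)^((x.2.2.2.2 : ℕ)) * Yv x.1 x.2.2.1 (i k))) *
          ∏ k, (Yv x.2.1 x.2.2.2.1 (j k) + (myOmega d)^((x.2.2.2.2 : ℕ)) * Yv x.1 x.2.2.1 (j k)))) := by
  classical
  have hd : ((d.factorial : ℕ) : ℂ) ≠ 0 := Nat.cast_ne_zero.mpr d.factorial_ne_zero
  have h0 : T i j = ((d.factorial : ℕ) : ℂ)⁻¹ * (((d.factorial : ℕ) : ℂ)⁻¹ *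
      (((d.factorial : ℕ) : ℂ) * ((d.factorial : ℕ) : ℂ) * T i j)) := by
    field_simp
  rw [h0, ← master T hT i j]
  simp only [Fintype.sum_prod_type]
  rw [Finset.mul_sum, Finset.mul_sum]
  refine Finset.sum_congr rfl fun α _ => ?_
  rw [Finset.mul_sum, Finset.mul_sum]
  refine Finset.sum_congr rfl fun β _ => ?_
  have exp : ∀ S S' : Finset (Fin d),
      (∏ k, Yv α S (i k)) * (∏ k, Yv β S' (j k))
        = (((2*d+1 : ℕ)) : ℂ)⁻¹ * ∑ t : Fin (2*d+1),
            (myOmega d)^((t : ℕ)*d) *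
              ((∏ k, conj (Yv β S' (i k) + (myOmega d)^((t : ℕ)) * Yv α S (i k))) *
                ∏ k, (Yv β S' (j k) + (myOmega d)^((t : ℕ)) * Yv α S (j k))) := by
    intro S S'
    have h1 : (∏ k, Yv α S (i k)) = ∏ k, conj (Yv α S (i k)) :=
      Finset.prod_congr rfl fun k _ => (Yv_conj _ _ _).symm
    rw [h1, key_expand (Yv α S) (Yv β S') i j, Finset.sum_range]
  calc ((d.factorial : ℕ) : ℂ)⁻¹ * (((d.factorial : ℕ) : ℂ)⁻¹ *
        (T α β * ((∑ S : Finset (Fin d), (-1:ℂ)^(d - S.card) * ∏ k, Yv α S (i k)) *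
          (∑ S' : Finset (Fin d), (-1:ℂ)^(d - S'.card) * ∏ k, Yv β S' (j k)))))
      = ∑ S : Finset (Fin d), ∑ S' : Finset (Fin d),
          ((d.factorial : ℕ) : ℂ)⁻¹ * (((d.factorial : ℕ) : ℂ)⁻¹ *
            (T α β * (((-1:ℂ)^(d - S.card) * (-1:ℂ)^(d - S'.card)) *
              ((∏ k, Yv α S (i k)) * (∏ k, Yv β S' (j k)))))) := by
        rw [Finset.sum_mul_sum]
        simp only [Finset.mul_sum]
        exact Finset.sum_congr rfl fun S _ => Finset.sum_congr rfl fun S' _ => by ring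
    _ = ∑ S : Finset (Fin d), ∑ S' : Finset (Fin d), ∑ t : Fin (2*d+1),
          ((((d.factorial : ℕ)) : ℂ)⁻¹ * ((((d.factorial : ℕ)) : ℂ)⁻¹ * ((((2*d+1 : ℕ)) : ℂ)⁻¹ *
            (T α β * ((-1:ℂ)^(d - S.card) * ((-1:ℂ)^(d - S'.card) *
            (myOmega d)^((t : ℕ) * d))))))) *
          ((∏ k, conj (Yv β S' (i k) + (myOmega d)^((t : ℕ)) * Yv α S (i k))) *
            ∏ k, (Yv β S' (j k) + (myOmega d)^((t : ℕ)) * Yv α S (j k))) := by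
        refine Finset.sum_congr rfl fun S _ => Finset.sum_congr rfl fun S' _ => ?_
        rw [exp S S']
        simp only [Finset.mul_sum]
        exact Finset.sum_congr rfl fun t _ => by ring

/-- `T` is PS iff `T = Σ_{s=1}^m λ_s conj(a_s)^{⊗d} ⊗ (a_s)^{⊗d}` for some
finite `m > 0`, complex `λ_s` and vectors `a_s ∈ ℂⁿ`. -/
theorem stmt5 {n d : ℕ} (T : (Fin d → Fin n) → (Fin d → Fin n) → ℂ) :
    IsPS T ↔ ∃ (m : ℕ) (_ : 0 < m) (lam : Fin m → ℂ) (a : Fin m → Fin n → ℂ),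
      ∀ i j, T i j
        = ∑ s, lam s * ((∏ k, conj (a s (i k))) * ∏ k, a s (j k)) := by
  constructor
  · intro hT
    classical
    set I := (Fin d → Fin n) × (Fin d → Fin n) × Finset (Fin d) × Finset (Fin d) ×
        Fin (2*d+1) with hI
    let e : I ≃ Fin (Fintype.card I) := Fintype.equivFin I
    let co : I → ℂ := fun x =>
      (((d.factorial : ℕ)) : ℂ)⁻¹ * ((((d.factorial : ℕ)) : ℂ)⁻¹ * ((((2*d+1 : ℕ)) : ℂ)⁻¹ *
          (T x.1 x.2.1 * ((-1:ℂ)^(d - x.2.2.1.card) * ((-1:ℂ)^(d - x.2.2.2.1.card) *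
          (myOmega d)^((x.2.2.2.2 : ℕ) * d))))))
    let vec : I → Fin n → ℂ := fun x v =>
      Yv x.2.1 x.2.2.2.1 v + (myOmega d)^((x.2.2.2.2 : ℕ)) * Yv x.1 x.2.2.1 v
    refine ⟨Fintype.card I + 1, Nat.succ_pos _,
      Fin.cons 0 (fun s => co (e.symm s)), Fin.cons 0 (fun s => vec (e.symm s)), ?_⟩
    intro i j
    rw [Fin.sum_univ_succ]
    simp only [Fin.cons_zero, Fin.cons_succ, zero_mul, zero_add]
    rw [Equiv.sum_comp e.symm (fun x => co x * ((∏ k, conj (vec x (i k))) * ∏ k, vec x (j k)))]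
    exact master2 T hT i j
  · rintro ⟨m, hm, lam, a, h⟩
    intro σ τ i j
    rw [h, h]
    refine Finset.sum_congr rfl fun s _ => ?_
    congr 1
    congr 1
    · exact Equiv.prod_comp σ (fun k => conj (a s (i k)))
    · exact Equiv.prod_comp τ (fun k => a s (j k))
end

section
/- Let T be the tensor of order 4 and dimension 2 with entries T_{1122} = T_{2211} = 1 and all other entries zero. Then T is conjugate partial-symmetric, rank(T) = 2, and rank_cps(T) ≥ 3. In particular, rank(T) < rank_ps(T), so there exists a CPS tensor whose rank is strictly smaller than its PS rank. -/
open scoped BigOperators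
open ComplexConjugate

/-- The rank of `T`. -/
noncomputable def tRank {n d : ℕ} (T : (Fin d → Fin n) → (Fin d → Fin n) → ℂ) : ℕ :=
  sInf {r : ℕ | ∃ a b : Fin r → Fin d → Fin n → ℂ,
    ∀ i j, T i j = ∑ s, (∏ k, a s k (i k)) * ∏ k, b s k (j k)}

/-- The PS rank of `T`. -/
noncomputable def psRank {n d : ℕ} (T : (Fin d → Fin n) → (Fin d → Fin n) → ℂ) : ℕ :=
  sInf {r : ℕ | ∃ (lam : Fin r → ℂ) (a : Fin r → Fin n → ℂ),
    ∀ i j, T i j = ∑ s, lam s * ((∏ k, conj (a s (i k))) * ∏ k, a s (j k))}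

/-- The CPS rank of `T`. -/
noncomputable def cpsRank {n d : ℕ} (T : (Fin d → Fin n) → (Fin d → Fin n) → ℂ) : ℕ :=
  sInf {r : ℕ | ∃ (lam : Fin r → ℝ) (a : Fin r → Fin n → ℂ),
    ∀ i j, T i j = ∑ s, (lam s : ℂ) * ((∏ k, conj (a s (i k))) * ∏ k, a s (j k))}

/-- The order-4, dimension-2 tensor with `T_{1122} = T_{2211} = 1` and all other
entries zero. -/
def T7 : (Fin 2 → Fin 2) → (Fin 2 → Fin 2) → ℂ := fun p q =>
  if (p 0 = 0 ∧ p 1 = 0 ∧ q 0 = 1 ∧ q 1 = 1) ∨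
     (p 0 = 1 ∧ p 1 = 1 ∧ q 0 = 0 ∧ q 1 = 0) then 1 else 0

/-!
The rank-two decomposition `e₁⊗e₁⊗e₂⊗e₂ + e₂⊗e₂⊗e₁⊗e₁` is immediate, and four CPS terms with
`a = (1, ω)`, `ω⁴ = 1`, suffice by a discrete Fourier identity. For the lower bound, the slice
`T(1,1,·,·)` of a PS decomposition `∑ λₛ āₛ ⊗ āₛ ⊗ aₛ ⊗ aₛ` is the binary quadratic form
`∑ λₛ āₛ₁² (aₛ₁ X + aₛ₂ Y)² = Y²`. With two terms its discriminant vanishes, which forces a term of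
nonzero weight with `aₛ₁ = 0`; but that weight `λₛ āₛ₁²` is then zero. Shorter decompositions pad
to length two with zero terms.
-/

section Decompositions

variable {n d : ℕ}

def HasRankDecomp (T : (Fin d → Fin n) → (Fin d → Fin n) → ℂ) (r : ℕ) : Prop :=
  ∃ a b : Fin r → Fin d → Fin n → ℂ, ∀ i j, T i j = ∑ s, (∏ k, a s k (i k)) * ∏ k, b s k (j k)

def HasPSDecomp (T : (Fin d → Fin n) → (Fin d → Fin n) → ℂ) (r : ℕ) : Prop :=
  ∃ (lam : Fin r → ℂ) (a : Fin r → Fin n → ℂ),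
    ∀ i j, T i j = ∑ s, lam s * ((∏ k, conj (a s (i k))) * ∏ k, a s (j k))

def HasCPSDecomp (T : (Fin d → Fin n) → (Fin d → Fin n) → ℂ) (r : ℕ) : Prop :=
  ∃ (lam : Fin r → ℝ) (a : Fin r → Fin n → ℂ),
    ∀ i j, T i j = ∑ s, (lam s : ℂ) * ((∏ k, conj (a s (i k))) * ∏ k, a s (j k))

variable {T : (Fin d → Fin n) → (Fin d → Fin n) → ℂ} {r m : ℕ}

theorem HasCPSDecomp.hasPSDecomp (h : HasCPSDecomp T r) : HasPSDecomp T r :=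
  let ⟨lam, a, h⟩ := h
  ⟨fun s => lam s, a, h⟩

theorem HasPSDecomp.succ (h : HasPSDecomp T r) : HasPSDecomp T (r + 1) := by
  obtain ⟨lam, a, h⟩ := h
  exact ⟨Fin.cons 0 lam, Fin.cons 0 a, fun i j => by simp [Fin.sum_univ_succ, h]⟩

theorem HasPSDecomp.mono (h : HasPSDecomp T r) (hrm : r ≤ m) : HasPSDecomp T m := by
  induction m, hrm using Nat.le_induction with
  | base => exact h
  | succ m _ ih => exact ih.succ

theorem HasRankDecomp.succ [NeZero d] (h : HasRankDecomp T r) : HasRankDecomp T (r + 1) := by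
  obtain ⟨a, b, h⟩ := h
  exact ⟨Fin.cons 0 a, Fin.cons 0 b, fun i j => by simp [Fin.sum_univ_succ, h, NeZero.ne d]⟩

theorem HasRankDecomp.mono [NeZero d] (h : HasRankDecomp T r) (hrm : r ≤ m) :
    HasRankDecomp T m := by
  induction m, hrm using Nat.le_induction with
  | base => exact h
  | succ m _ ih => exact ih.succ

end Decompositions

-- If `Y² = ∑ₛ μₛ (xₛ X + yₛ Y)²` with two terms, some term of nonzero weight is a multiple of `Y²`.
theorem exists_ne_zero_and_eq_zero_of_sum_mul_self {K : Type*} [CommRing K] [IsDomain K]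
    {μ x y : Fin 2 → K} (hxx : ∑ s, μ s * (x s * x s) = 0) (hxy : ∑ s, μ s * (x s * y s) = 0)
    (hyy : ∑ s, μ s * (y s * y s) = 1) : ∃ s, μ s ≠ 0 ∧ x s = 0 := by
  rw [Fin.sum_univ_two] at hxx hxy hyy
  by_cases h0 : μ 0 = 0
  · have h1 : μ 1 ≠ 0 := by rintro h1; simp [h0, h1] at hyy
    exact ⟨1, h1, by simpa [h0, h1] using hxx⟩
  by_cases h1 : μ 1 = 0
  · exact ⟨0, h0, by simpa [h0, h1] using hxx⟩
  refine ⟨0, h0, ?_⟩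
  -- the discriminant `AC - B²` of the form
  have hdisc : μ 0 * μ 1 * (x 0 * y 1 - x 1 * y 0) ^ 2 = 0 := by
    linear_combination (μ 0 * (y 0 * y 0) + μ 1 * (y 1 * y 1)) * hxx
      - (μ 0 * (x 0 * y 0) + μ 1 * (x 1 * y 1)) * hxy
  have hdet : x 0 * y 1 - x 1 * y 0 = 0 := by simpa [h0, h1] using hdisc
  have : x 0 * x 0 = 0 := by
    linear_combination (-(x 0 * x 0)) * hyy + y 0 * y 0 * hxx + μ 1 * (x 0 * y 1 + x 1 * y 0) * hdet
  simpa using this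

section Ranks

variable {n d : ℕ} {T : (Fin d → Fin n) → (Fin d → Fin n) → ℂ} {m : ℕ}

theorem tRank_le (h : HasRankDecomp T m) : tRank T ≤ m := Nat.sInf_le h

theorem lt_tRank [NeZero d] (hne : ∃ r, HasRankDecomp T r) (h : ¬ HasRankDecomp T m) :
    m < tRank T :=
  le_csInf hne fun r hr => by
    by_contra! hrm
    exact h (HasRankDecomp.mono hr (Nat.le_of_lt_succ hrm))

theorem lt_psRank (hne : ∃ r, HasPSDecomp T r) (h : ¬ HasPSDecomp T m) : m < psRank T :=
  le_csInf hne fun r hr => by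
    by_contra! hrm
    exact h (HasPSDecomp.mono hr (Nat.le_of_lt_succ hrm))

theorem lt_cpsRank (hne : ∃ r, HasCPSDecomp T r) (h : ¬ HasPSDecomp T m) : m < cpsRank T :=
  le_csInf hne fun r hr => by
    by_contra! hrm
    exact h ((HasCPSDecomp.hasPSDecomp hr).mono (Nat.le_of_lt_succ hrm))

end Ranks

theorem T7_apply (p q : Fin 2 → Fin 2) :
    T7 p q = if ((∀ k, p k = 0) ∧ ∀ k, q k = 1) ∨ ((∀ k, p k = 1) ∧ ∀ k, q k = 0)
      then 1 else 0 := by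
  simp only [T7, Fin.forall_fin_two, and_assoc]

theorem T7_isCPS : IsCPS T7 := by
  have hperm (σ : Equiv.Perm (Fin 2)) (p : Fin 2 → Fin 2) (v : Fin 2) :
      (∀ k, p (σ k) = v) ↔ ∀ k, p k = v :=
    σ.forall_congr_right (q := fun k => p k = v)
  refine ⟨fun σ τ i j => ?_, fun i j => ?_⟩
  · simp only [T7_apply, Function.comp_apply, hperm]
  · simp only [T7_apply]
    split_ifs <;> first | tauto | simp

theorem T7_hasRankDecomp_two : HasRankDecomp T7 2 := by
  refine ⟨fun s _ v => if v = s then 1 else 0, fun s _ v => if v = s then 0 else 1, ?_⟩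
  simp only [Fin.forall_fin_succ_pi, Fin.forall_fin_zero_pi, Fin.forall_fin_two]
  simp [T7, Fin.sum_univ_two, Fin.prod_univ_two]

-- With weight `ω² / 4` on `a = (1, ω)`, the `(i, j)` entry is `∑ ω^(2 + |j| - |i|) / 4`, where
-- `|i|` counts the indices equal to `1`; it is `1` iff `|j| - |i| = ±2`, and `0` otherwise.
theorem T7_hasCPSDecomp_four : HasCPSDecomp T7 4 := by
  refine ⟨![1/4, 1/4, -1/4, -1/4], ![![1, 1], ![1, -1], ![1, Complex.I], ![1, -Complex.I]], ?_⟩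
  simp only [Fin.forall_fin_succ_pi, Fin.forall_fin_zero_pi, Fin.forall_fin_two]
  norm_num [T7, Fin.sum_univ_four, Fin.prod_univ_two, Matrix.cons_val_two, Matrix.cons_val_three]

theorem T7_not_hasRankDecomp_one : ¬ HasRankDecomp T7 1 := by
  rintro ⟨a, b, h⟩
  have h01 : (∏ k, a 0 k 0) * ∏ k, b 0 k 1 = 1 := by simpa [T7] using (h 0 1).symm
  have h10 : (∏ k, a 0 k 1) * ∏ k, b 0 k 0 = 1 := by simpa [T7] using (h 1 0).symm
  have h00 : (∏ k, a 0 k 0) * ∏ k, b 0 k 0 = 0 := by simpa [T7] using (h 0 0).symm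
  exact mul_ne_zero (left_ne_zero_of_mul_eq_one h01) (right_ne_zero_of_mul_eq_one h10) h00

theorem T7_not_hasPSDecomp_two : ¬ HasPSDecomp T7 2 := by
  rintro ⟨lam, a, h⟩
  set μ : Fin 2 → ℂ := fun s => lam s * (conj (a s 0) * conj (a s 0))
  have row (j : Fin 2 → Fin 2) : T7 0 j = ∑ s, μ s * (a s (j 0) * a s (j 1)) := by
    rw [h]
    exact Finset.sum_congr rfl fun s _ => by
      simp only [Fin.prod_univ_two, μ, Pi.zero_apply]; ring
  obtain ⟨s, hμs, hxs⟩ := exists_ne_zero_and_eq_zero_of_sum_mul_self (μ := μ)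
    (x := fun s => a s 0) (y := fun s => a s 1)
    (by simpa [T7] using (row ![0, 0]).symm) (by simpa [T7] using (row ![0, 1]).symm)
    (by simpa [T7] using (row ![1, 1]).symm)
  exact hμs (by simp [μ, hxs])

/-- `T7` is CPS, `rank(T7) = 2`, `rank_cps(T7) ≥ 3`, and `rank(T7) < rank_ps(T7)`. -/
theorem stmt7 :
    IsCPS T7 ∧ tRank T7 = 2 ∧ 3 ≤ cpsRank T7 ∧ tRank T7 < psRank T7 ∧
    ∃ T : (Fin 2 → Fin 2) → (Fin 2 → Fin 2) → ℂ, IsCPS T ∧ tRank T < psRank T := by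
  have hrank : tRank T7 = 2 :=
    le_antisymm (tRank_le T7_hasRankDecomp_two)
      (lt_tRank ⟨2, T7_hasRankDecomp_two⟩ T7_not_hasRankDecomp_one)
  have hps : 2 < psRank T7 :=
    lt_psRank ⟨4, T7_hasCPSDecomp_four.hasPSDecomp⟩ T7_not_hasPSDecomp_two
  have hcps : 2 < cpsRank T7 := lt_cpsRank ⟨4, T7_hasCPSDecomp_four⟩ T7_not_hasPSDecomp_two
  have hlt : tRank T7 < psRank T7 := by omega
  exact ⟨T7_isCPS, hrank, hcps, hlt, T7, T7_isCPS, hlt⟩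
end

section
/- Let T be a conjugate partial-symmetric tensor of order 2d ≥ 4 and dimension n. Then the infimum of ‖T − X‖ over all CPS tensors X with rank_cps(X) = 1 equals the infimum of ‖T − X‖ over all PS tensors X with rank_ps(X) = 1, and both are greater than or equal to the infimum of ‖T − X‖ over all complex tensors X with rank(X) = 1. -/
open scoped BigOperators
open ComplexConjugate

/-- The Frobenius norm of a tensor. -/
noncomputable def frobNorm {n d : ℕ} (T : (Fin d → Fin n) → (Fin d → Fin n) → ℂ) : ℝ :=
  Real.sqrt (∑ i : Fin d → Fin n, ∑ j : Fin d → Fin n, Complex.normSq (T i j))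

/-! The Hermitian part `(X + Xᴴ)/2` of a PS rank-one tensor `λ · conj(a)^{⊗d} ⊗ a^{⊗d}` is
`(Re λ) · conj(a)^{⊗d} ⊗ a^{⊗d}`. Since `T = Tᴴ`, the tensor `T - (X + Xᴴ)/2` is the midpoint of
`T - X` and `(T - X)ᴴ`, which have the same Frobenius norm, so replacing `X` by its Hermitian part
does not increase the distance to `T`. Thus every PS rank-one distance dominates a CPS rank-one
distance (or, when `Re λ = 0`, a limit of such). Conversely, CPS rank-one tensors are PS rank-one,
and for `d ≥ 1` the scalar can be absorbed into one factor, so they are also rank one. -/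

abbrev Tensor (n d : ℕ) : Type := (Fin d → Fin n) → (Fin d → Fin n) → ℂ

theorem Nat.sInf_eq_one_iff {S : Set ℕ} : sInf S = 1 ↔ 1 ∈ S ∧ 0 ∉ S := by
  refine ⟨fun h => ⟨?_, fun h0 => by simpa [h] using Nat.sInf_le h0⟩,
    fun ⟨h1, h0⟩ => ?_⟩
  · rw [← h]
    exact Nat.sInf_mem (Nat.nonempty_of_sInf_eq_succ h)
  · have : sInf S ≠ 0 := fun hz => (Nat.sInf_eq_zero.1 hz).elim h0 (by rintro rfl; exact h1)
    have := Nat.sInf_le h1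
    omega

variable {n d : ℕ}

def conjTensorPow (a : Fin n → ℂ) : Tensor n d :=
  fun i j => (∏ k, conj (a (i k))) * ∏ k, a (j k)

def conjTranspose (X : Tensor n d) : Tensor n d := fun i j => conj (X j i)

noncomputable def hermPart (X : Tensor n d) : Tensor n d := (1 / 2 : ℂ) • (X + conjTranspose X)

theorem conj_conjTensorPow (a : Fin n → ℂ) (i j : Fin d → Fin n) :
    conj (conjTensorPow a j i) = conjTensorPow a i j := by
  simp only [conjTensorPow, map_mul, map_prod, Complex.conj_conj, mul_comm]

theorem conjTensorPow_perm (a : Fin n → ℂ) (σ τ : Equiv.Perm (Fin d))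
    (i j : Fin d → Fin n) :
    conjTensorPow a (i ∘ σ) (j ∘ τ) = conjTensorPow a i j := by
  simp only [conjTensorPow, Function.comp_apply, Equiv.prod_comp σ (fun k => conj (a (i k))),
    Equiv.prod_comp τ (fun k => a (j k))]

theorem hermPart_smul_conjTensorPow (c : ℂ) (a : Fin n → ℂ) :
    hermPart (c • conjTensorPow (d := d) a) = (c.re : ℂ) • conjTensorPow a := by
  ext i j
  simp only [hermPart, conjTranspose, Pi.smul_apply, Pi.add_apply, smul_eq_mul, map_mul,
    conj_conjTensorPow]
  rw [← add_mul, Complex.add_conj]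
  push_cast
  ring

theorem isCPS_ofReal_smul_conjTensorPow (μ : ℝ) (a : Fin n → ℂ) :
    IsCPS ((μ : ℂ) • conjTensorPow (d := d) a) := by
  refine ⟨fun σ τ i j => by simp only [Pi.smul_apply, conjTensorPow_perm], fun i j => ?_⟩
  simp only [Pi.smul_apply, smul_eq_mul, map_mul, Complex.conj_ofReal, conj_conjTensorPow]

theorem cpsRank_eq_one_iff {X : Tensor n d} :
    cpsRank X = 1 ↔ X ≠ 0 ∧ ∃ (μ : ℝ) (a : Fin n → ℂ), X = (μ : ℂ) • conjTensorPow a := by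
  rw [cpsRank, Nat.sInf_eq_one_iff, and_comm]
  congr! 1
  · simp [funext_iff]
  · constructor
    · rintro ⟨lam, a, h⟩
      exact ⟨lam 0, a 0, by ext i j; simpa [conjTensorPow] using h i j⟩
    · rintro ⟨μ, a, rfl⟩
      exact ⟨fun _ => μ, fun _ => a, by simp [conjTensorPow]⟩

theorem psRank_eq_one_iff {X : Tensor n d} :
    psRank X = 1 ↔ X ≠ 0 ∧ ∃ (c : ℂ) (a : Fin n → ℂ), X = c • conjTensorPow a := by
  rw [psRank, Nat.sInf_eq_one_iff, and_comm]
  congr! 1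
  · simp [funext_iff]
  · constructor
    · rintro ⟨lam, a, h⟩
      exact ⟨lam 0, a 0, by ext i j; simpa [conjTensorPow] using h i j⟩
    · rintro ⟨c, a, rfl⟩
      exact ⟨fun _ => c, fun _ => a, by simp [conjTensorPow]⟩

theorem tRank_eq_one_iff {X : Tensor n d} :
    tRank X = 1 ↔ X ≠ 0 ∧ ∃ a b : Fin d → Fin n → ℂ,
      X = fun i j => (∏ k, a k (i k)) * ∏ k, b k (j k) := by
  rw [tRank, Nat.sInf_eq_one_iff, and_comm]
  congr! 1
  · simp [funext_iff]
  · constructor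
    · rintro ⟨a, b, h⟩
      exact ⟨a 0, b 0, by ext i j; simpa using h i j⟩
    · rintro ⟨a, b, rfl⟩
      exact ⟨fun _ => a, fun _ => b, by simp⟩

theorem frobNorm_nonneg (X : Tensor n d) : 0 ≤ frobNorm X := Real.sqrt_nonneg _

theorem frobNorm_eq_norm (X : Tensor n d) :
    frobNorm X = ‖(WithLp.toLp 2 (Function.uncurry X) :
      EuclideanSpace ℂ ((Fin d → Fin n) × (Fin d → Fin n)))‖ := by
  simp only [frobNorm, EuclideanSpace.norm_eq, Complex.normSq_eq_norm_sq, Fintype.sum_prod_type,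
    Function.uncurry_apply_pair]

theorem frobNorm_add_le (X Y : Tensor n d) : frobNorm (X + Y) ≤ frobNorm X + frobNorm Y := by
  simp only [frobNorm_eq_norm]
  exact norm_add_le (WithLp.toLp 2 (Function.uncurry X) : EuclideanSpace ℂ _)
    (WithLp.toLp 2 (Function.uncurry Y))

theorem frobNorm_smul (c : ℂ) (X : Tensor n d) : frobNorm (c • X) = ‖c‖ * frobNorm X := by
  simp only [frobNorm_eq_norm]
  exact norm_smul c (WithLp.toLp 2 (Function.uncurry X) : EuclideanSpace ℂ _)

theorem frobNorm_conjTranspose (X : Tensor n d) : frobNorm (conjTranspose X) = frobNorm X := by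
  simp only [frobNorm, conjTranspose, Complex.normSq_conj]
  rw [Finset.sum_comm]

theorem continuous_frobNorm_sub_smul (T X : Tensor n d) :
    Continuous fun μ : ℝ => frobNorm (T - (μ : ℂ) • X) := by
  simp only [frobNorm_eq_norm]
  fun_prop

theorem frobNorm_sub_hermPart_le {T : Tensor n d} (hT : conjTranspose T = T) (X : Tensor n d) :
    frobNorm (T - hermPart X) ≤ frobNorm (T - X) := by
  have hsplit : T - hermPart X = (1 / 2 : ℂ) • ((T - X) + conjTranspose (T - X)) := by
    ext i j
    have := congrFun₂ hT i j
    simp only [conjTranspose] at this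
    simp only [hermPart, conjTranspose, Pi.smul_apply, Pi.add_apply, Pi.sub_apply, smul_eq_mul,
      map_sub, this]
    ring
  calc frobNorm (T - hermPart X)
      ≤ 1 / 2 * (frobNorm (T - X) + frobNorm (conjTranspose (T - X))) := by
        rw [hsplit, frobNorm_smul, show ‖(1 / 2 : ℂ)‖ = 1 / 2 by norm_num]
        exact mul_le_mul_of_nonneg_left (frobNorm_add_le _ _) (by norm_num)
    _ = frobNorm (T - X) := by rw [frobNorm_conjTranspose]; ring

theorem psRank_eq_one_of_cpsRank_eq_one {X : Tensor n d} (hX : cpsRank X = 1) :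
    psRank X = 1 := by
  obtain ⟨hX0, μ, a, rfl⟩ := cpsRank_eq_one_iff.1 hX
  exact psRank_eq_one_iff.2 ⟨hX0, μ, a, rfl⟩

theorem tRank_eq_one_of_psRank_eq_one (hd : d ≠ 0) {X : Tensor n d} (hX : psRank X = 1) :
    tRank X = 1 := by
  obtain ⟨hX0, c, a, rfl⟩ := psRank_eq_one_iff.1 hX
  let k₀ : Fin d := ⟨0, Nat.pos_of_ne_zero hd⟩
  refine tRank_eq_one_iff.2 ⟨hX0, fun k x => (if k = k₀ then c else 1) * conj (a x),
    fun _ x => a x, ?_⟩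
  ext i j
  simp only [Pi.smul_apply, smul_eq_mul, conjTensorPow, Finset.prod_mul_distrib,
    Finset.prod_ite_eq', Finset.mem_univ, if_true, mul_assoc]

section Approximation

variable (T : Tensor n d)

def cpsRankOneDists : Set ℝ :=
  {v | ∃ X : Tensor n d, IsCPS X ∧ cpsRank X = 1 ∧ v = frobNorm (fun i j => T i j - X i j)}

def psRankOneDists : Set ℝ :=
  {v | ∃ X : Tensor n d, IsPS X ∧ psRank X = 1 ∧ v = frobNorm (fun i j => T i j - X i j)}

def rankOneDists : Set ℝ :=
  {v | ∃ X : Tensor n d, tRank X = 1 ∧ v = frobNorm (fun i j => T i j - X i j)}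

theorem cpsRankOneDists_bddBelow : BddBelow (cpsRankOneDists T) :=
  ⟨0, by rintro _ ⟨X, -, -, rfl⟩; exact frobNorm_nonneg _⟩

theorem psRankOneDists_bddBelow : BddBelow (psRankOneDists T) :=
  ⟨0, by rintro _ ⟨X, -, -, rfl⟩; exact frobNorm_nonneg _⟩

theorem rankOneDists_bddBelow : BddBelow (rankOneDists T) :=
  ⟨0, by rintro _ ⟨X, -, rfl⟩; exact frobNorm_nonneg _⟩

theorem cpsRankOneDists_subset_psRankOneDists : cpsRankOneDists T ⊆ psRankOneDists T :=
  fun _ ⟨X, hX, hr, hv⟩ => ⟨X, hX.1, psRank_eq_one_of_cpsRank_eq_one hr, hv⟩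

theorem cpsRankOneDists_subset_rankOneDists (hd : d ≠ 0) :
    cpsRankOneDists T ⊆ rankOneDists T :=
  fun _ ⟨X, _, hr, hv⟩ =>
    ⟨X, tRank_eq_one_of_psRank_eq_one hd (psRank_eq_one_of_cpsRank_eq_one hr), hv⟩

theorem cpsRankOneDists_nonempty [Nonempty (Fin d → Fin n)] :
    (cpsRankOneDists T).Nonempty := by
  have hne : conjTensorPow (d := d) (fun _ : Fin n => (1 : ℂ)) ≠ 0 := by
    obtain ⟨i⟩ := ‹Nonempty (Fin d → Fin n)›
    exact Function.ne_iff.2 ⟨i, Function.ne_iff.2 ⟨i, by simp [conjTensorPow]⟩⟩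
  refine ⟨_, (1 : ℝ) • conjTensorPow (fun _ => 1), isCPS_ofReal_smul_conjTensorPow 1 _,
    cpsRank_eq_one_iff.2 ⟨?_, 1, _, rfl⟩, rfl⟩
  simpa using hne

section Empty

variable [IsEmpty (Fin d → Fin n)]

theorem cpsRankOneDists_eq_empty : cpsRankOneDists T = ∅ :=
  Set.eq_empty_of_forall_notMem fun _ ⟨_, _, hX, _⟩ =>
    (cpsRank_eq_one_iff.1 hX).1 (Subsingleton.elim _ _)

theorem psRankOneDists_eq_empty : psRankOneDists T = ∅ :=
  Set.eq_empty_of_forall_notMem fun _ ⟨_, _, hX, _⟩ =>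
    (psRank_eq_one_iff.1 hX).1 (Subsingleton.elim _ _)

theorem rankOneDists_eq_empty : rankOneDists T = ∅ :=
  Set.eq_empty_of_forall_notMem fun _ ⟨_, hX, _⟩ =>
    (tRank_eq_one_iff.1 hX).1 (Subsingleton.elim _ _)

end Empty

theorem sInf_cpsRankOneDists_le_frobNorm_sub_smul {a : Fin n → ℂ}
    (ha : conjTensorPow (d := d) a ≠ 0) (μ : ℝ) :
    sInf (cpsRankOneDists T) ≤ frobNorm (T - (μ : ℂ) • conjTensorPow a) := by
  have hmem : {0}ᶜ ⊆
      {ν : ℝ | sInf (cpsRankOneDists T) ≤ frobNorm (T - (ν : ℂ) • conjTensorPow a)} :=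
    fun ν hν => csInf_le (cpsRankOneDists_bddBelow T) ⟨_, isCPS_ofReal_smul_conjTensorPow ν a,
      cpsRank_eq_one_iff.2 ⟨smul_ne_zero (by exact_mod_cast hν) ha, ν, a, rfl⟩, rfl⟩
  -- `μ = 0` gives the zero tensor, which is not rank one, but it is a limit of `μ ≠ 0`.
  have hclosed := isClosed_le (continuous_const (y := sInf (cpsRankOneDists T)))
    (continuous_frobNorm_sub_smul T (conjTensorPow a))
  exact hclosed.closure_subset_iff.2 hmem ((dense_compl_singleton (0 : ℝ)).closure_eq ▸ trivial)

theorem sInf_cpsRankOneDists_le_of_mem_psRankOneDists (hT : conjTranspose T = T) {v : ℝ}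
    (hv : v ∈ psRankOneDists T) : sInf (cpsRankOneDists T) ≤ v := by
  obtain ⟨X, -, hX, rfl⟩ := hv
  obtain ⟨hX0, c, a, rfl⟩ := psRank_eq_one_iff.1 hX
  have ha : conjTensorPow a ≠ 0 := right_ne_zero_of_smul hX0
  calc sInf (cpsRankOneDists T) ≤ frobNorm (T - (c.re : ℂ) • conjTensorPow a) :=
        sInf_cpsRankOneDists_le_frobNorm_sub_smul T ha c.re
    _ = frobNorm (T - hermPart (c • conjTensorPow a)) := by rw [hermPart_smul_conjTensorPow]
    _ ≤ frobNorm (T - c • conjTensorPow a) := frobNorm_sub_hermPart_le hT _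

end Approximation

/-- For a CPS tensor `T` of order `2d ≥ 4`: the best rank-one CPS approximation error
equals the best rank-one PS approximation error, and both are at least the best
rank-one complex approximation error. -/
theorem stmt11 {n d : ℕ} (hd : 2 ≤ d) (T : (Fin d → Fin n) → (Fin d → Fin n) → ℂ)
    (hT : IsCPS T) :
    sInf {v : ℝ | ∃ X : (Fin d → Fin n) → (Fin d → Fin n) → ℂ,
        IsCPS X ∧ cpsRank X = 1 ∧ v = frobNorm (fun i j => T i j - X i j)}
      = sInf {v : ℝ | ∃ X : (Fin d → Fin n) → (Fin d → Fin n) → ℂ,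
        IsPS X ∧ psRank X = 1 ∧ v = frobNorm (fun i j => T i j - X i j)} ∧
    sInf {v : ℝ | ∃ X : (Fin d → Fin n) → (Fin d → Fin n) → ℂ,
        tRank X = 1 ∧ v = frobNorm (fun i j => T i j - X i j)}
      ≤ sInf {v : ℝ | ∃ X : (Fin d → Fin n) → (Fin d → Fin n) → ℂ,
        IsCPS X ∧ cpsRank X = 1 ∧ v = frobNorm (fun i j => T i j - X i j)} := by
  change sInf (cpsRankOneDists T) = sInf (psRankOneDists T) ∧
    sInf (rankOneDists T) ≤ sInf (cpsRankOneDists T)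
  rcases isEmpty_or_nonempty (Fin d → Fin n) with hI | hI
  · simp only [cpsRankOneDists_eq_empty, psRankOneDists_eq_empty, rankOneDists_eq_empty,
      le_refl, and_self]
  have hTh : conjTranspose T = T := funext₂ fun i j => (hT.2 i j).symm
  have hne := cpsRankOneDists_nonempty T
  have hsub := cpsRankOneDists_subset_psRankOneDists T
  refine ⟨le_antisymm ?_ ?_, ?_⟩
  · exact le_csInf (hne.mono hsub) fun _ => sInf_cpsRankOneDists_le_of_mem_psRankOneDists T hTh
  · exact csInf_le_csInf (psRankOneDists_bddBelow T) hne hsub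
  · exact csInf_le_csInf (rankOneDists_bddBelow T) hne
      (cpsRankOneDists_subset_rankOneDists T (by omega))
end

section
/- Let T be a conjugate partial-symmetric tensor of order 2d and dimension n, and let π be a permutation of {1,...,2d} such that for every k in {1,...,d}, exactly one of π_k and π_{d+k} belongs to {1,...,d}. Then the π-matricization M_π(T) is a Hermitian matrix. -/
open scoped BigOperators
open ComplexConjugate

/-- Combine two `d`-tuples of indices into a `2d`-tuple. -/
def splice {n d : ℕ} (i j : Fin d → Fin n) : Fin (2 * d) → Fin n := fun k =>
  if h : (k : ℕ) < d then i ⟨k, h⟩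
  else j ⟨(k : ℕ) - d, by have := k.isLt; omega⟩

/-- Partial-symmetric tensor of order `2d` and dimension `n`: invariant under all
permutations of its first `d` indices and of its last `d` indices. -/
def cIsPS {n d : ℕ} (T : (Fin (2 * d) → Fin n) → ℂ) : Prop :=
  ∀ (σ τ : Equiv.Perm (Fin d)) (i j : Fin d → Fin n),
    T (splice (i ∘ σ) (j ∘ τ)) = T (splice i j)

/-- Conjugate partial-symmetric tensor. -/
def cIsCPS {n d : ℕ} (T : (Fin (2 * d) → Fin n) → ℂ) : Prop :=
  cIsPS T ∧ ∀ i j : Fin d → Fin n, T (splice i j) = conj (T (splice j i))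

/-- The `π`-transpose `T^π` of `T`, characterized by `T_{i₁…i_{2d}} = (T^π)_{i_{π₁}…i_{π_{2d}}}`. -/
def ptranspose {n d : ℕ} (π : Equiv.Perm (Fin (2 * d)))
    (T : (Fin (2 * d) → Fin n) → ℂ) : (Fin (2 * d) → Fin n) → ℂ :=
  fun i => T (i ∘ π.symm)

/-- The `π`-matricization `M_π(T)`. -/
def pmat {n d : ℕ} (π : Equiv.Perm (Fin (2 * d))) (T : (Fin (2 * d) → Fin n) → ℂ) :
    Matrix (Fin d → Fin n) (Fin d → Fin n) ℂ :=
  Matrix.of fun p q => ptranspose π T (splice p q)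

/-- The block-swap map on `Fin (2*d)`. -/
def bswapFun (d : ℕ) : Fin (2 * d) → Fin (2 * d) := fun m =>
  if _ : (m : ℕ) < d then ⟨(m : ℕ) + d, by omega⟩
  else ⟨(m : ℕ) - d, by have := m.isLt; omega⟩

lemma bswap_involutive (d : ℕ) : Function.Involutive (bswapFun d) := by
  intro m
  unfold bswapFun
  by_cases h : (m : ℕ) < d
  · rw [dif_pos h, dif_neg (by simp only [Fin.val_mk]; omega)]
    apply Fin.ext; simp
  · have := m.isLt
    rw [dif_neg h, dif_pos (by simp only [Fin.val_mk]; omega)]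
    apply Fin.ext; simp; omega

/-- The block-swap permutation. -/
def bswap (d : ℕ) : Equiv.Perm (Fin (2 * d)) :=
  (bswap_involutive d).toPerm _

lemma bswap_apply {d : ℕ} (m : Fin (2 * d)) : bswap d m = bswapFun d m := rfl

lemma splice_swap {n d : ℕ} (p q : Fin d → Fin n) (x : Fin (2 * d)) :
    splice q p x = splice p q (bswap d x) := by
  rw [bswap_apply, splice, splice]
  unfold bswapFun
  by_cases h : (x : ℕ) < d
  · rw [dif_pos h]
    simp only [dif_pos h]
    rw [dif_neg (by omega)]
    congr 1
    apply Fin.ext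
    simp
  · have := x.isLt
    rw [dif_neg h]
    simp only [dif_neg h]
    rw [dif_pos (by omega)]

lemma splice_decomp {n d : ℕ} (g : Fin (2 * d) → Fin n) :
    g = splice (fun k => g ⟨(k : ℕ), by linarith [k.isLt]⟩)
        (fun k => g ⟨d + (k : ℕ), by linarith [k.isLt]⟩) := by
  funext m
  rw [splice]
  by_cases h : (m : ℕ) < d
  · rw [dif_pos h]
  · rw [dif_neg h]
    have := m.isLt
    congr 1
    apply Fin.ext
    simp only [Fin.val_mk]
    omega

/-- If `T` is CPS and, for every `k ∈ {1,…,d}`, exactly one of `π_k`, `π_{d+k}` lies in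
`{1,…,d}`, then `M_π(T)` is Hermitian. -/
theorem stmt15 {n d : ℕ} (T : (Fin (2 * d) → Fin n) → ℂ) (hT : cIsCPS T)
    (π : Equiv.Perm (Fin (2 * d)))
    (hπ : ∀ k : Fin d,
      (((π ⟨(k : ℕ), by have := k.isLt; omega⟩ : Fin (2 * d)) : ℕ) < d) ↔
      ¬ (((π ⟨d + (k : ℕ), by have := k.isLt; omega⟩ : Fin (2 * d)) : ℕ) < d)) :
    (pmat π T).IsHermitian := by
  obtain ⟨hPS, hC⟩ := hT
  -- extend the hypothesis to all of Fin (2*d)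
  have hπ' : ∀ s : Fin (2 * d), ((π s : ℕ) < d ↔ ¬ ((π (bswap d s) : ℕ) < d)) := by
    intro s
    by_cases h : (s : ℕ) < d
    · have h1 := hπ ⟨(s : ℕ), h⟩
      have e1 : (⟨(s : ℕ), by have := s.isLt; omega⟩ : Fin (2 * d)) = s := Fin.ext rfl
      have e2 : (⟨d + (s : ℕ), by have := s.isLt; omega⟩ : Fin (2 * d)) = bswap d s := by
        rw [bswap_apply]; unfold bswapFun; rw [dif_pos h]; apply Fin.ext
        simp only [Fin.val_mk]; omega
      rw [e1, e2] at h1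
      exact h1
    · have hs := s.isLt
      have h1 := hπ ⟨(s : ℕ) - d, by omega⟩
      have e1 : (⟨((⟨(s : ℕ) - d, by omega⟩ : Fin d) : ℕ), by omega⟩ : Fin (2 * d)) =
          bswap d s := by
        rw [bswap_apply]; unfold bswapFun; rw [dif_neg h]
      have e2 : (⟨d + ((⟨(s : ℕ) - d, by omega⟩ : Fin d) : ℕ), by omega⟩ : Fin (2 * d)) = s := by
        apply Fin.ext; simp only [Fin.val_mk]; omega
      rw [e1, e2] at h1
      tauto
  set ρ : Equiv.Perm (Fin (2 * d)) := π.symm.trans ((bswap d).trans π) with hρdef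
  have hρ : ∀ m : Fin (2 * d), ((m : ℕ) < d ↔ ¬ ((ρ m : ℕ) < d)) := by
    intro m
    have h1 := hπ' (π.symm m)
    simpa [hρdef] using h1
  have hρsymm : ∀ m : Fin (2 * d), π.symm (ρ m) = bswap d (π.symm m) := by
    intro m
    simp [hρdef]
  rw [Matrix.IsHermitian]
  ext p q
  rw [Matrix.conjTranspose_apply]
  show star ((pmat π T) q p) = (pmat π T) p q
  simp only [pmat, Matrix.of_apply, ptranspose]
  set i : Fin d → Fin n := fun k => (splice p q ∘ π.symm) ⟨(k : ℕ), by have := k.isLt; omega⟩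
    with hidef
  set j : Fin d → Fin n := fun k => (splice p q ∘ π.symm) ⟨d + (k : ℕ), by have := k.isLt; omega⟩
    with hjdef
  -- the permutations
  have hτlt : ∀ k : Fin d, d ≤ ((ρ ⟨(k : ℕ), by have := k.isLt; omega⟩ : Fin (2 * d)) : ℕ) := by
    intro k
    have := (hρ ⟨(k : ℕ), by have := k.isLt; omega⟩).mp (by simp)
    omega
  have hσlt : ∀ k : Fin d, ((ρ ⟨d + (k : ℕ), by have := k.isLt; omega⟩ : Fin (2 * d)) : ℕ) < d := by
    intro k
    have h1 := hρ (⟨d + (k : ℕ), by have := k.isLt; omega⟩ : Fin (2 * d))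
    simp only [Fin.val_mk] at h1
    by_contra hcon
    have := h1.mpr hcon
    omega
  set τf : Fin d → Fin d := fun k =>
    ⟨((ρ ⟨(k : ℕ), by have := k.isLt; omega⟩ : Fin (2 * d)) : ℕ) - d, by
      have := (ρ (⟨(k : ℕ), by have := k.isLt; omega⟩ : Fin (2 * d))).isLt
      have := hτlt k
      omega⟩ with hτfdef
  set σf : Fin d → Fin d := fun k =>
    ⟨((ρ ⟨d + (k : ℕ), by have := k.isLt; omega⟩ : Fin (2 * d)) : ℕ), hσlt k⟩ with hσfdef
  have hτinj : Function.Injective τf := by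
    intro a b hab
    rw [hτfdef] at hab
    have h1 := hτlt a
    have h2 := hτlt b
    have h3 : (ρ ⟨(a : ℕ), by have := a.isLt; omega⟩ : Fin (2 * d)) =
        ρ ⟨(b : ℕ), by have := b.isLt; omega⟩ := by
      apply Fin.ext
      have := Fin.mk.injEq _ _ _ _ ▸ hab
      simp only [Fin.mk.injEq] at hab
      omega
    have := ρ.injective h3
    simp only [Fin.mk.injEq] at this
    exact Fin.ext this
  have hσinj : Function.Injective σf := by
    intro a b hab
    rw [hσfdef] at hab
    simp only [Fin.mk.injEq] at hab
    have h3 : (ρ ⟨d + (a : ℕ), by have := a.isLt; omega⟩ : Fin (2 * d)) =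
        ρ ⟨d + (b : ℕ), by have := b.isLt; omega⟩ := Fin.ext hab
    have := ρ.injective h3
    simp only [Fin.mk.injEq] at this
    exact Fin.ext (by omega)
  set τ : Equiv.Perm (Fin d) := Equiv.ofBijective τf (Finite.injective_iff_bijective.mp hτinj)
    with hτdef
  set σ : Equiv.Perm (Fin d) := Equiv.ofBijective σf (Finite.injective_iff_bijective.mp hσinj)
    with hσdef
  -- the key identity
  have key : splice q p ∘ π.symm = splice (j ∘ τ) (i ∘ σ) := by
    funext m
    show splice q p (π.symm m) = splice (j ∘ τ) (i ∘ σ) m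
    rw [splice_swap p q, ← hρsymm m]
    conv_rhs => rw [splice]
    by_cases hm : (m : ℕ) < d
    · rw [dif_pos hm]
      show splice p q (π.symm (ρ m)) = j (τf ⟨(m : ℕ), hm⟩)
      rw [hjdef]
      simp only [Function.comp_apply]
      congr 2
      apply Fin.ext
      simp only [Fin.val_mk, hτfdef]
      have h1 : (⟨((⟨(m : ℕ), hm⟩ : Fin d) : ℕ), by have := m.isLt; omega⟩ : Fin (2 * d)) = m :=
        Fin.ext rfl
      rw [h1]
      have := hτlt ⟨(m : ℕ), hm⟩
      rw [h1] at this
      omega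
    · rw [dif_neg hm]
      have hm2 := m.isLt
      show splice p q (π.symm (ρ m)) = i (σf ⟨(m : ℕ) - d, by omega⟩)
      rw [hidef]
      simp only [Function.comp_apply]
      congr 2
      apply Fin.ext
      simp only [Fin.val_mk, hσfdef]
      congr 2
      apply Fin.ext
      simp only [Fin.val_mk]
      omega
  rw [key]
  have hdecomp : splice p q ∘ π.symm = splice i j := splice_decomp _
  rw [hdecomp]
  have h1 : T (splice (j ∘ τ) (i ∘ σ)) = T (splice j i) := hPS τ σ j i
  rw [h1, hC j i]
  exact star_star _
end

section
/- Let T be a conjugate partial-symmetric tensor of order 2d and dimension n, and let π be a permutation of {1,...,2d} such that (i) for every k in {1,...,d} exactly one of π_k and π_{d+k} belongs to {1,...,d}, and (ii) floor(d/2) ≤ |{π_1,...,π_d} ∩ {1,...,d}| ≤ ceil(d/2). Then the maximum of T(conj(x)^d x^d) := Σ_{i_1,...,i_{2d}} T_{i_1...i_{2d}} conj(x_{i_1})···conj(x_{i_d}) x_{i_{d+1}}···x_{i_{2d}} over all x in ℂⁿ with ‖x‖ = 1 equals the maximum of Re⟨conj(M_π(T)), X⟩ = Re(Σ_{p,q}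 M_π(T)_{pq} X_{pq}) over all n^d × n^d Hermitian matrices X with trace(X) = 1, matrix rank(X) = 1, and X = M_π(Y) for some conjugate partial-symmetric tensor Y of order 2d and dimension n. -/
open scoped BigOperators
open ComplexConjugate

namespace Aux

variable {n d : ℕ}

def emb1 (k : Fin d) : Fin (2 * d) := ⟨(k : ℕ), by have := k.isLt; omega⟩
def emb2 (k : Fin d) : Fin (2 * d) := ⟨d + (k : ℕ), by have := k.isLt; omega⟩

@[simp] lemma splice_emb1 (p q : Fin d → Fin n) (k : Fin d) :
    splice p q (emb1 k) = p k := by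
  simp [splice, emb1]

@[simp] lemma splice_emb2 (p q : Fin d → Fin n) (k : Fin d) :
    splice p q (emb2 k) = q k := by
  have : ¬ (d + (k:ℕ) < d) := by omega
  simp [splice, emb2, this]

lemma splice_eq (j : Fin (2*d) → Fin n) : splice (j ∘ emb1) (j ∘ emb2) = j := by
  funext m
  by_cases h : (m : ℕ) < d
  · simp only [splice, dif_pos h, Function.comp_apply]
    congr 1
  · simp only [splice, dif_neg h, Function.comp_apply]
    congr 1
    apply Fin.ext
    have := m.isLt
    simp only [emb2]
    omega

/-- product over `Fin (2*d)` splits -/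
lemma prod_split (f : Fin (2*d) → ℂ) :
    ∏ m, f m = (∏ k, f (emb1 k)) * ∏ k, f (emb2 k) := by
  rw [← Equiv.prod_comp (finSumFinEquiv.trans (finCongr (two_mul d).symm)) f,
    Fintype.prod_sum_type]
  congr 1

def spliceEquiv : ((Fin d → Fin n) × (Fin d → Fin n)) ≃ (Fin (2*d) → Fin n) where
  toFun pq := splice pq.1 pq.2
  invFun j := (j ∘ emb1, j ∘ emb2)
  left_inv := by
    rintro ⟨p, q⟩
    simp only [Prod.mk.injEq]
    constructor <;> funext k <;> simp
  right_inv := splice_eq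

lemma sum_splice (H : (Fin (2*d) → Fin n) → ℂ) :
    ∑ p : Fin d → Fin n, ∑ q : Fin d → Fin n, H (splice p q) = ∑ j, H j := by
  rw [← Equiv.sum_comp (spliceEquiv (n := n) (d := d)) H, Fintype.sum_prod_type]
  rfl

end Aux

section
open Aux
variable {n d : ℕ}

/-- rank-one CPS tensor generated by x -/
def Y0 (x : Fin n → ℂ) : (Fin (2*d) → Fin n) → ℂ := fun j =>
  ∏ m : Fin (2*d), if (m : ℕ) < d then conj (x (j m)) else x (j m)

def uof (π : Equiv.Perm (Fin (2*d))) (x : Fin n → ℂ) : (Fin d → Fin n) → ℂ := fun p =>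
  ∏ k : Fin d, if ((π (emb1 k) : ℕ)) < d then conj (x (p k)) else x (p k)

lemma Y0_splice (x : Fin n → ℂ) (p q : Fin d → Fin n) :
    Y0 x (splice p q) = (∏ k, conj (x (p k))) * ∏ k, x (q k) := by
  unfold Y0
  rw [prod_split]
  congr 1
  · apply Finset.prod_congr rfl; intro k _
    have h1 : ((emb1 k : Fin (2*d)) : ℕ) < d := k.isLt
    rw [if_pos h1, splice_emb1]
  · apply Finset.prod_congr rfl; intro k _
    have h2 : ¬ ((emb2 k : Fin (2*d)) : ℕ) < d := by simp [emb2]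
    rw [if_neg h2, splice_emb2]

lemma Y0_CPS (x : Fin n → ℂ) : cIsCPS (Y0 (n := n) (d := d) x) := by
  constructor
  · intro σ τ i j
    rw [Y0_splice, Y0_splice]
    congr 1
    · exact Equiv.prod_comp σ fun k => conj (x (i k))
    · exact Equiv.prod_comp τ fun k => x (j k)
  · intro i j
    rw [Y0_splice, Y0_splice, map_mul, ← map_prod, ← map_prod]
    simp only [Complex.conj_conj]
    ring

variable (π : Equiv.Perm (Fin (2*d)))

lemma PROD (hπ : ∀ k : Fin d, ((π (emb1 k) : ℕ) < d) ↔ ¬ ((π (emb2 k) : ℕ) < d))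
    (x : Fin n → ℂ) (p q : Fin d → Fin n) :
    Y0 x (splice p q ∘ ⇑π.symm) = uof π x p * conj (uof π x q) := by
  unfold Y0
  have step1 :
      (∏ m : Fin (2*d), if (m : ℕ) < d then conj (x ((splice p q ∘ ⇑π.symm) m))
        else x ((splice p q ∘ ⇑π.symm) m))
      = ∏ m : Fin (2*d), if ((π m : ℕ)) < d then conj (x (splice p q m))
          else x (splice p q m) := by
    rw [← Equiv.prod_comp π
      (fun m => if (m : ℕ) < d then conj (x ((splice p q ∘ ⇑π.symm) m))
        else x ((splice p q ∘ ⇑π.symm) m))]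
    apply Finset.prod_congr rfl; intro m _
    simp only [Function.comp_apply, Equiv.symm_apply_apply]
  rw [step1, prod_split]
  congr 1
  · unfold uof
    apply Finset.prod_congr rfl; intro k _
    rw [splice_emb1]
  · unfold uof
    rw [map_prod]
    apply Finset.prod_congr rfl; intro k _
    rw [splice_emb2]
    by_cases h : ((π (emb1 k) : ℕ)) < d
    · have h2 : ¬ ((π (emb2 k) : ℕ)) < d := (hπ k).mp h
      rw [if_neg h2, if_pos h, Complex.conj_conj]
    · have h2 : ((π (emb2 k) : ℕ)) < d := by
        by_contra h3
        exact h ((hπ k).mpr h3)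
      rw [if_pos h2, if_neg h]

def precompEquiv : (Fin (2*d) → Fin n) ≃ (Fin (2*d) → Fin n) where
  toFun j := j ∘ ⇑π.symm
  invFun j := j ∘ ⇑π
  left_inv j := by funext m; simp
  right_inv j := by funext m; simp

lemma VALUE (hπ : ∀ k : Fin d, ((π (emb1 k) : ℕ) < d) ↔ ¬ ((π (emb2 k) : ℕ) < d))
    (T : (Fin (2*d) → Fin n) → ℂ) (x : Fin n → ℂ) :
    ∑ p : Fin d → Fin n, ∑ q : Fin d → Fin n, pmat π T p q * (uof π x p * conj (uof π x q))
    = ∑ p : Fin d → Fin n, ∑ q : Fin d → Fin n,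
        T (splice p q) * ((∏ k, conj (x (p k))) * ∏ k, x (q k)) := by
  calc ∑ p : Fin d → Fin n, ∑ q : Fin d → Fin n, pmat π T p q * (uof π x p * conj (uof π x q))
      = ∑ p : Fin d → Fin n, ∑ q : Fin d → Fin n,
          (fun j => T (j ∘ ⇑π.symm) * Y0 x (j ∘ ⇑π.symm)) (splice p q) := by
        apply Finset.sum_congr rfl; intro p _
        apply Finset.sum_congr rfl; intro q _
        show pmat π T p q * (uof π x p * conj (uof π x q))
          = T (splice p q ∘ ⇑π.symm) * Y0 x (splice p q ∘ ⇑π.symm)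
        rw [PROD π hπ]
        rfl
    _ = ∑ j, T (j ∘ ⇑π.symm) * Y0 x (j ∘ ⇑π.symm) :=
        sum_splice (fun j => T (j ∘ ⇑π.symm) * Y0 x (j ∘ ⇑π.symm))
    _ = ∑ j, T j * Y0 x j :=
        Fintype.sum_equiv (precompEquiv π)
          (fun j => T (j ∘ ⇑π.symm) * Y0 x (j ∘ ⇑π.symm))
          (fun j => T j * Y0 x j) (fun j => rfl)
    _ = ∑ p : Fin d → Fin n, ∑ q : Fin d → Fin n,
          T (splice p q) * ((∏ k, conj (x (p k))) * ∏ k, x (q k)) := by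
        rw [← sum_splice (fun j => T j * Y0 x j)]
        apply Finset.sum_congr rfl; intro p _
        apply Finset.sum_congr rfl; intro q _
        show T (splice p q) * Y0 x (splice p q) = _
        rw [Y0_splice]

lemma trace_uof (x : Fin n → ℂ) :
    ∑ p : Fin d → Fin n, uof π x p * conj (uof π x p)
      = (∑ i, x i * conj (x i)) ^ d := by
  have key : ∀ p : Fin d → Fin n, uof π x p * conj (uof π x p)
      = ∏ k : Fin d, (x (p k) * conj (x (p k))) := by
    intro p
    unfold uof
    rw [map_prod, ← Finset.prod_mul_distrib]
    apply Finset.prod_congr rfl; intro k _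
    split_ifs with h
    · rw [Complex.conj_conj]; ring
    · rfl
  calc ∑ p : Fin d → Fin n, uof π x p * conj (uof π x p)
      = ∑ p : Fin d → Fin n, ∏ k : Fin d, (x (p k) * conj (x (p k))) :=
        Finset.sum_congr rfl fun p _ => key p
    _ = ∏ k : Fin d, ∑ i, (x i * conj (x i)) := by
        rw [Finset.prod_univ_sum, Fintype.piFinset_univ]
    _ = (∑ i, x i * conj (x i)) ^ d := by
        rw [Finset.prod_const, Finset.card_univ, Fintype.card_fin]

end
section R1
variable {N : Type*} [Fintype N] [DecidableEq N]

lemma rank_one_decomp (X : Matrix N N ℂ) (hH : X.IsHermitian) (htr : X.trace = 1)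
    (hrk : X.rank = 1) : ∃ u : N → ℂ, ∀ p q, X p q = u p * conj (u q) := by
  classical
  -- rank = finrank of range of mulVecLin
  unfold Matrix.rank at hrk
  obtain ⟨v, hv0, hv⟩ := finrank_eq_one_iff'.mp hrk
  set w : N → ℂ := (v : N → ℂ) with hw
  have hw0 : w ≠ 0 := fun h => hv0 (Subtype.coe_injective (by simpa [hw] using h))
  -- each column is a multiple of w
  have hcol : ∀ q, ∃ c : ℂ, ∀ p, X p q = c * w p := by
    intro q
    have hmem : (fun p => X p q) ∈ LinearMap.range X.mulVecLin := by
      refine ⟨Pi.single q 1, ?_⟩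
      show X.mulVec (Pi.single q 1) = fun p => X p q
      funext p
      rw [Matrix.mulVec_single]
      exact mul_one _
    obtain ⟨c, hc⟩ := hv ⟨fun p => X p q, hmem⟩
    refine ⟨c, fun p => ?_⟩
    have := congrArg (fun z : ↥(LinearMap.range X.mulVecLin) => (z : N → ℂ) p) hc
    simpa using this.symm
  choose c hc using hcol
  -- pick p₀ with w p₀ ≠ 0
  obtain ⟨p₀, hp₀⟩ : ∃ p₀, w p₀ ≠ 0 := by
    by_contra h
    push_neg at h
    exact hw0 (funext h)
  -- Hermitian relation
  have herm : ∀ p q, X p q = conj (X q p) := fun p q => by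
    rw [show (starRingEnd ℂ) (X q p) = star (X q p) from rfl, ← Matrix.conjTranspose_apply, hH]
  -- c q = conj(w q) * μ
  set μ : ℂ := conj (c p₀) / w p₀ with hμ
  have hcq : ∀ q, c q = conj (w q) * μ := by
    intro q
    have h1 : X p₀ q = c q * w p₀ := hc q p₀
    have h2 : X p₀ q = conj (X q p₀) := herm p₀ q
    have h3 : X q p₀ = c p₀ * w q := hc p₀ q
    have : c q * w p₀ = conj (c p₀) * conj (w q) := by
      rw [← h1, h2, h3, map_mul]
    rw [hμ, mul_div_assoc', eq_div_iff hp₀]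
    rw [this]; ring
  -- trace
  have htr2 : (∑ p, w p * conj (w p)) * μ = 1 := by
    have : X.trace = ∑ p, c p * w p := by
      unfold Matrix.trace
      apply Finset.sum_congr rfl
      intro p _
      exact (hc p p)
    rw [this] at htr
    rw [← htr]
    rw [Finset.sum_mul]
    apply Finset.sum_congr rfl
    intro p _
    rw [hcq p]; ring
  set s : ℂ := ∑ p, w p * conj (w p) with hs
  have hsreal : s = ((∑ p, Complex.normSq (w p) : ℝ) : ℂ) := by
    rw [hs]
    push_cast
    apply Finset.sum_congr rfl
    intro p _
    rw [Complex.mul_conj]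
  have hsnn : (0:ℝ) ≤ ∑ p, Complex.normSq (w p) :=
    Finset.sum_nonneg fun p _ => Complex.normSq_nonneg _
  have hs0 : s ≠ 0 := by
    intro h
    rw [h, zero_mul] at htr2
    exact one_ne_zero htr2.symm
  have hμval : μ = s⁻¹ := by
    field_simp at htr2 ⊢
    linear_combination htr2
  -- s is a positive real
  set sr : ℝ := ∑ p, Complex.normSq (w p) with hsr
  have hsrpos : 0 < sr := by
    rcases lt_or_eq_of_le hsnn with h | h
    · exact h
    · exfalso; apply hs0; rw [hsreal, ← h]; simp
  -- define u
  refine ⟨fun p => (Real.sqrt sr⁻¹ : ℝ) * w p, fun p q => ?_⟩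
  have hXpq : X p q = μ * (w p * conj (w q)) := by
    rw [hc q p, hcq q]; ring
  rw [hXpq, hμval]
  have : conj ((Real.sqrt sr⁻¹ : ℝ) * w q) = (Real.sqrt sr⁻¹ : ℝ) * conj (w q) := by
    rw [map_mul, Complex.conj_ofReal]
  rw [this]
  have hsq : ((Real.sqrt sr⁻¹ : ℝ) : ℂ) * ((Real.sqrt sr⁻¹ : ℝ) : ℂ) = (sr⁻¹ : ℝ) := by
    rw [← Complex.ofReal_mul, Real.mul_self_sqrt (inv_nonneg.mpr hsnn)]
  have hinv : s⁻¹ = ((sr⁻¹ : ℝ) : ℂ) := by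
    rw [hsreal, Complex.ofReal_inv]
  rw [hinv]
  rw [← hsq]
  ring
end R1
section Swaps
open Aux
variable {n d : ℕ} (π : Equiv.Perm (Fin (2*d)))

lemma emb1_mk (m : Fin (2*d)) (h : (m : ℕ) < d) : emb1 (⟨(m : ℕ), h⟩ : Fin d) = m :=
  Fin.ext rfl

lemma emb2_mk (m : Fin (2*d)) (h : ¬ (m : ℕ) < d) :
    emb2 (⟨(m : ℕ) - d, by have := m.isLt; omega⟩ : Fin d) = m := by
  apply Fin.ext
  show d + ((m : ℕ) - d) = (m : ℕ)
  have := m.isLt; omega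

lemma emb1_ne_emb2 (k k' : Fin d) : emb1 k ≠ emb2 k' := by
  intro h
  have : (k : ℕ) = d + (k' : ℕ) := congrArg Fin.val h
  have := k.isLt; omega

lemma recover1 (p q : Fin d → Fin n) :
    (splice p q ∘ ⇑π.symm) ∘ ⇑π ∘ emb1 = p := by
  funext k
  simp

lemma recover2 (p q : Fin d → Fin n) :
    (splice p q ∘ ⇑π.symm) ∘ ⇑π ∘ emb2 = q := by
  funext k
  simp

lemma splice_comp_perm (a b : Fin d → Fin n) (σ τ : Equiv.Perm (Fin d)) (m : Fin (2*d)) :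
    splice (a ∘ σ) (b ∘ τ) m
      = splice a b (if h : (m:ℕ) < d then emb1 (σ ⟨(m:ℕ), h⟩)
          else emb2 (τ ⟨(m:ℕ) - d, by have := m.isLt; omega⟩)) := by
  by_cases h : (m:ℕ) < d
  · have lhs : splice (a ∘ σ) (b ∘ τ) m = (a ∘ σ) ⟨(m:ℕ), h⟩ := dif_pos h
    rw [lhs, dif_pos h, splice_emb1, Function.comp_apply]
  · have lhs : splice (a ∘ σ) (b ∘ τ) m
        = (b ∘ τ) ⟨(m:ℕ) - d, by have := m.isLt; omega⟩ := dif_neg h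
    rw [lhs, dif_neg h, splice_emb2, Function.comp_apply]

variable {Y : (Fin (2*d) → Fin n) → ℂ} {u : (Fin d → Fin n) → ℂ}

lemma master_s17 (hM : ∀ p q : Fin d → Fin n, u p * conj (u q) = Y (splice p q ∘ ⇑π.symm))
    (j : Fin (2*d) → Fin n) :
    Y j = u (j ∘ ⇑π ∘ emb1) * conj (u (j ∘ ⇑π ∘ emb2)) := by
  rw [hM]
  congr 1
  funext m
  rw [Function.comp_apply]
  symm
  by_cases h : ((π.symm m : Fin (2*d)) : ℕ) < d
  · show splice _ _ (π.symm m) = j m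
    rw [show splice (j ∘ ⇑π ∘ emb1) (j ∘ ⇑π ∘ emb2) (π.symm m)
        = (j ∘ ⇑π ∘ emb1) ⟨((π.symm m : Fin (2*d)) : ℕ), h⟩ from dif_pos h]
    show j (π (emb1 ⟨((π.symm m : Fin (2*d)) : ℕ), h⟩)) = j m
    rw [emb1_mk _ h, Equiv.apply_symm_apply]
  · show splice _ _ (π.symm m) = j m
    rw [show splice (j ∘ ⇑π ∘ emb1) (j ∘ ⇑π ∘ emb2) (π.symm m)
        = (j ∘ ⇑π ∘ emb2) ⟨((π.symm m : Fin (2*d)) : ℕ) - d,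
            by have := (π.symm m).isLt; omega⟩ from dif_neg h]
    show j (π (emb2 ⟨((π.symm m : Fin (2*d)) : ℕ) - d, _⟩)) = j m
    rw [emb2_mk _ h, Equiv.apply_symm_apply]

lemma swap1 (hM : ∀ p q : Fin d → Fin n, u p * conj (u q) = Y (splice p q ∘ ⇑π.symm))
    (hPS : cIsPS Y) (k₁ k₂ : Fin d)
    (h₁ : ((π (emb1 k₁) : Fin (2*d)) : ℕ) < d)
    (h₂ : ((π (emb2 k₂) : Fin (2*d)) : ℕ) < d)
    (p q : Fin d → Fin n) :
    u (Function.update p k₁ (q k₂)) * conj (u (Function.update q k₂ (p k₁)))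
      = u p * conj (u q) := by
  classical
  set j : Fin (2*d) → Fin n := splice p q ∘ ⇑π.symm with hj
  set a : Fin d → Fin n := j ∘ emb1 with ha
  set b : Fin d → Fin n := j ∘ emb2 with hb
  set σ : Equiv.Perm (Fin d) :=
    Equiv.swap (⟨((π (emb1 k₁) : Fin (2*d)) : ℕ), h₁⟩ : Fin d)
      (⟨((π (emb2 k₂) : Fin (2*d)) : ℕ), h₂⟩ : Fin d) with hσ
  have key := hPS σ 1 a b
  rw [master_s17 π hM, master_s17 π hM (splice a b)] at key
  have hba : splice a b = j := splice_eq j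
  have c3 : splice a b ∘ ⇑π ∘ emb1 = p := by rw [hba, hj]; exact recover1 π p q
  have c4 : splice a b ∘ ⇑π ∘ emb2 = q := by rw [hba, hj]; exact recover2 π p q
  -- the permuted side
  have c1 : splice (a ∘ ⇑σ) (b ∘ ⇑(1 : Equiv.Perm (Fin d))) ∘ ⇑π ∘ emb1
      = Function.update p k₁ (q k₂) := by
    funext k
    show splice (a ∘ ⇑σ) (b ∘ ⇑(1 : Equiv.Perm (Fin d))) (π (emb1 k)) = _
    rw [splice_comp_perm]
    by_cases hm : ((π (emb1 k) : Fin (2*d)) : ℕ) < d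
    · rw [dif_pos hm]
      by_cases hk : k = k₁
      · subst hk
        have : σ ⟨((π (emb1 k) : Fin (2*d)) : ℕ), hm⟩
            = ⟨((π (emb2 k₂) : Fin (2*d)) : ℕ), h₂⟩ := by
          rw [hσ]
          exact Equiv.swap_apply_left _ _
        rw [this, splice_emb1, ha, Function.comp_apply, emb1_mk _ h₂, hj,
          Function.comp_apply, Equiv.symm_apply_apply, splice_emb2,
          Function.update_self]
      · have ne1 : (⟨((π (emb1 k) : Fin (2*d)) : ℕ), hm⟩ : Fin d)
            ≠ ⟨((π (emb1 k₁) : Fin (2*d)) : ℕ), h₁⟩ := by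
          intro hcon
          apply hk
          have h5 : π (emb1 k) = π (emb1 k₁) := Fin.ext (Fin.mk_eq_mk.mp hcon)
          have h6 : emb1 k = emb1 k₁ := π.injective h5
          exact Fin.ext (congrArg (fun z : Fin (2*d) => (z : ℕ)) h6)
        have ne2 : (⟨((π (emb1 k) : Fin (2*d)) : ℕ), hm⟩ : Fin d)
            ≠ ⟨((π (emb2 k₂) : Fin (2*d)) : ℕ), h₂⟩ := by
          intro hcon
          have h5 : π (emb1 k) = π (emb2 k₂) := Fin.ext (Fin.mk_eq_mk.mp hcon)
          exact emb1_ne_emb2 k k₂ (π.injective h5)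
        have : σ ⟨((π (emb1 k) : Fin (2*d)) : ℕ), hm⟩
            = ⟨((π (emb1 k) : Fin (2*d)) : ℕ), hm⟩ := by
          rw [hσ]
          exact Equiv.swap_apply_of_ne_of_ne ne1 ne2
        rw [this, splice_emb1, ha, Function.comp_apply, emb1_mk _ hm, hj,
          Function.comp_apply, Equiv.symm_apply_apply, splice_emb1,
          Function.update_of_ne hk]
    · rw [dif_neg hm]
      have hk : k ≠ k₁ := by
        intro hcon; subst hcon; exact hm h₁
      rw [splice_emb2, Equiv.Perm.coe_one, id_eq, hb, Function.comp_apply,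
        emb2_mk _ hm, hj, Function.comp_apply,
        Equiv.symm_apply_apply, splice_emb1, Function.update_of_ne hk]
  have c2 : splice (a ∘ ⇑σ) (b ∘ ⇑(1 : Equiv.Perm (Fin d))) ∘ ⇑π ∘ emb2
      = Function.update q k₂ (p k₁) := by
    funext k
    show splice (a ∘ ⇑σ) (b ∘ ⇑(1 : Equiv.Perm (Fin d))) (π (emb2 k)) = _
    rw [splice_comp_perm]
    by_cases hm : ((π (emb2 k) : Fin (2*d)) : ℕ) < d
    · rw [dif_pos hm]
      by_cases hk : k = k₂
      · subst hk
        have : σ ⟨((π (emb2 k) : Fin (2*d)) : ℕ), hm⟩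
            = ⟨((π (emb1 k₁) : Fin (2*d)) : ℕ), h₁⟩ := by
          rw [hσ]
          exact Equiv.swap_apply_right _ _
        rw [this, splice_emb1, ha, Function.comp_apply, emb1_mk _ h₁, hj,
          Function.comp_apply, Equiv.symm_apply_apply, splice_emb1,
          Function.update_self]
      · have ne1 : (⟨((π (emb2 k) : Fin (2*d)) : ℕ), hm⟩ : Fin d)
            ≠ ⟨((π (emb1 k₁) : Fin (2*d)) : ℕ), h₁⟩ := by
          intro hcon
          have h5 : π (emb2 k) = π (emb1 k₁) := Fin.ext (Fin.mk_eq_mk.mp hcon)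
          exact emb1_ne_emb2 k₁ k (π.injective h5).symm
        have ne2 : (⟨((π (emb2 k) : Fin (2*d)) : ℕ), hm⟩ : Fin d)
            ≠ ⟨((π (emb2 k₂) : Fin (2*d)) : ℕ), h₂⟩ := by
          intro hcon
          apply hk
          have h5 : π (emb2 k) = π (emb2 k₂) := Fin.ext (Fin.mk_eq_mk.mp hcon)
          have h6 : emb2 k = emb2 k₂ := π.injective h5
          have h7 : d + (k : ℕ) = d + (k₂ : ℕ) := congrArg (fun z : Fin (2*d) => (z : ℕ)) h6
          exact Fin.ext (by omega)
        have : σ ⟨((π (emb2 k) : Fin (2*d)) : ℕ), hm⟩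
            = ⟨((π (emb2 k) : Fin (2*d)) : ℕ), hm⟩ := by
          rw [hσ]
          exact Equiv.swap_apply_of_ne_of_ne ne1 ne2
        rw [this, splice_emb1, ha, Function.comp_apply, emb1_mk _ hm, hj,
          Function.comp_apply, Equiv.symm_apply_apply, splice_emb2,
          Function.update_of_ne hk]
    · rw [dif_neg hm]
      have hk : k ≠ k₂ := by
        intro hcon; subst hcon; exact hm h₂
      rw [splice_emb2, Equiv.Perm.coe_one, id_eq, hb, Function.comp_apply,
        emb2_mk _ hm, hj, Function.comp_apply,
        Equiv.symm_apply_apply, splice_emb2, Function.update_of_ne hk]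
  rw [c1, c2, c3, c4] at key
  exact key

end Swaps
section Swaps2
open Aux
variable {n d : ℕ} (π : Equiv.Perm (Fin (2*d)))
variable {Y : (Fin (2*d) → Fin n) → ℂ} {u : (Fin d → Fin n) → ℂ}

lemma swap2 (hM : ∀ p q : Fin d → Fin n, u p * conj (u q) = Y (splice p q ∘ ⇑π.symm))
    (hPS : cIsPS Y) (k₁ k₂ : Fin d)
    (h₁ : ¬ ((π (emb1 k₁) : Fin (2*d)) : ℕ) < d)
    (h₂ : ¬ ((π (emb2 k₂) : Fin (2*d)) : ℕ) < d)
    (p q : Fin d → Fin n) :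
    u (Function.update p k₁ (q k₂)) * conj (u (Function.update q k₂ (p k₁)))
      = u p * conj (u q) := by
  classical
  have pf₁ : ((π (emb1 k₁) : Fin (2*d)) : ℕ) - d < d := by
    have := (π (emb1 k₁)).isLt; omega
  have pf₂ : ((π (emb2 k₂) : Fin (2*d)) : ℕ) - d < d := by
    have := (π (emb2 k₂)).isLt; omega
  set j : Fin (2*d) → Fin n := splice p q ∘ ⇑π.symm with hj
  set a : Fin d → Fin n := j ∘ emb1 with ha
  set b : Fin d → Fin n := j ∘ emb2 with hb
  set τ : Equiv.Perm (Fin d) :=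
    Equiv.swap (⟨((π (emb1 k₁) : Fin (2*d)) : ℕ) - d, pf₁⟩ : Fin d)
      (⟨((π (emb2 k₂) : Fin (2*d)) : ℕ) - d, pf₂⟩ : Fin d) with hτ
  have key := hPS 1 τ a b
  rw [master_s17 π hM, master_s17 π hM (splice a b)] at key
  have hba : splice a b = j := splice_eq j
  have c3 : splice a b ∘ ⇑π ∘ emb1 = p := by rw [hba, hj]; exact recover1 π p q
  have c4 : splice a b ∘ ⇑π ∘ emb2 = q := by rw [hba, hj]; exact recover2 π p q
  have c1 : splice (a ∘ ⇑(1 : Equiv.Perm (Fin d))) (b ∘ ⇑τ) ∘ ⇑π ∘ emb1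
      = Function.update p k₁ (q k₂) := by
    funext k
    show splice (a ∘ ⇑(1 : Equiv.Perm (Fin d))) (b ∘ ⇑τ) (π (emb1 k)) = _
    rw [splice_comp_perm]
    by_cases hm : ((π (emb1 k) : Fin (2*d)) : ℕ) < d
    · rw [dif_pos hm]
      have hk : k ≠ k₁ := by
        intro hcon; subst hcon; exact h₁ hm
      rw [Equiv.Perm.coe_one, id_eq, splice_emb1, ha, Function.comp_apply,
        emb1_mk _ hm, hj, Function.comp_apply, Equiv.symm_apply_apply,
        splice_emb1, Function.update_of_ne hk]
    · rw [dif_neg hm]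
      by_cases hk : k = k₁
      · subst hk
        have hτap : τ ⟨((π (emb1 k) : Fin (2*d)) : ℕ) - d,
            by have := (π (emb1 k)).isLt; omega⟩
            = ⟨((π (emb2 k₂) : Fin (2*d)) : ℕ) - d, pf₂⟩ := by
          rw [hτ]
          exact Equiv.swap_apply_left _ _
        rw [hτap, splice_emb2, hb, Function.comp_apply, emb2_mk _ h₂, hj,
          Function.comp_apply, Equiv.symm_apply_apply, splice_emb2,
          Function.update_self]
      · have ne1 : (⟨((π (emb1 k) : Fin (2*d)) : ℕ) - d,
            by have := (π (emb1 k)).isLt; omega⟩ : Fin d)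
            ≠ ⟨((π (emb1 k₁) : Fin (2*d)) : ℕ) - d, pf₁⟩ := by
          intro hcon
          apply hk
          have hval := Fin.mk_eq_mk.mp hcon
          have h5 : π (emb1 k) = π (emb1 k₁) := by
            apply Fin.ext
            have := (π (emb1 k)).isLt
            have := (π (emb1 k₁)).isLt
            omega
          have h6 : emb1 k = emb1 k₁ := π.injective h5
          exact Fin.ext (congrArg (fun z : Fin (2*d) => (z : ℕ)) h6)
        have ne2 : (⟨((π (emb1 k) : Fin (2*d)) : ℕ) - d,
            by have := (π (emb1 k)).isLt; omega⟩ : Fin d)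
            ≠ ⟨((π (emb2 k₂) : Fin (2*d)) : ℕ) - d, pf₂⟩ := by
          intro hcon
          have hval := Fin.mk_eq_mk.mp hcon
          have h5 : π (emb1 k) = π (emb2 k₂) := by
            apply Fin.ext
            have := (π (emb1 k)).isLt
            have := (π (emb2 k₂)).isLt
            omega
          exact emb1_ne_emb2 k k₂ (π.injective h5)
        have hτap : τ ⟨((π (emb1 k) : Fin (2*d)) : ℕ) - d,
            by have := (π (emb1 k)).isLt; omega⟩
            = ⟨((π (emb1 k) : Fin (2*d)) : ℕ) - d,
              by have := (π (emb1 k)).isLt; omega⟩ := by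
          rw [hτ]
          exact Equiv.swap_apply_of_ne_of_ne ne1 ne2
        rw [hτap, splice_emb2, hb, Function.comp_apply, emb2_mk _ hm, hj,
          Function.comp_apply, Equiv.symm_apply_apply, splice_emb1,
          Function.update_of_ne hk]
  have c2 : splice (a ∘ ⇑(1 : Equiv.Perm (Fin d))) (b ∘ ⇑τ) ∘ ⇑π ∘ emb2
      = Function.update q k₂ (p k₁) := by
    funext k
    show splice (a ∘ ⇑(1 : Equiv.Perm (Fin d))) (b ∘ ⇑τ) (π (emb2 k)) = _
    rw [splice_comp_perm]
    by_cases hm : ((π (emb2 k) : Fin (2*d)) : ℕ) < d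
    · rw [dif_pos hm]
      have hk : k ≠ k₂ := by
        intro hcon; subst hcon; exact h₂ hm
      rw [Equiv.Perm.coe_one, id_eq, splice_emb1, ha, Function.comp_apply,
        emb1_mk _ hm, hj, Function.comp_apply, Equiv.symm_apply_apply,
        splice_emb2, Function.update_of_ne hk]
    · rw [dif_neg hm]
      by_cases hk : k = k₂
      · subst hk
        have hτap : τ ⟨((π (emb2 k) : Fin (2*d)) : ℕ) - d,
            by have := (π (emb2 k)).isLt; omega⟩
            = ⟨((π (emb1 k₁) : Fin (2*d)) : ℕ) - d, pf₁⟩ := by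
          rw [hτ]
          exact Equiv.swap_apply_right _ _
        rw [hτap, splice_emb2, hb, Function.comp_apply, emb2_mk _ h₁, hj,
          Function.comp_apply, Equiv.symm_apply_apply, splice_emb1,
          Function.update_self]
      · have ne1 : (⟨((π (emb2 k) : Fin (2*d)) : ℕ) - d,
            by have := (π (emb2 k)).isLt; omega⟩ : Fin d)
            ≠ ⟨((π (emb1 k₁) : Fin (2*d)) : ℕ) - d, pf₁⟩ := by
          intro hcon
          have hval := Fin.mk_eq_mk.mp hcon
          have h5 : π (emb2 k) = π (emb1 k₁) := by
            apply Fin.ext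
            have := (π (emb2 k)).isLt
            have := (π (emb1 k₁)).isLt
            omega
          exact emb1_ne_emb2 k₁ k (π.injective h5).symm
        have ne2 : (⟨((π (emb2 k) : Fin (2*d)) : ℕ) - d,
            by have := (π (emb2 k)).isLt; omega⟩ : Fin d)
            ≠ ⟨((π (emb2 k₂) : Fin (2*d)) : ℕ) - d, pf₂⟩ := by
          intro hcon
          apply hk
          have hval := Fin.mk_eq_mk.mp hcon
          have h5 : π (emb2 k) = π (emb2 k₂) := by
            apply Fin.ext
            have := (π (emb2 k)).isLt
            have := (π (emb2 k₂)).isLt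
            omega
          have h6 : emb2 k = emb2 k₂ := π.injective h5
          have h7 : d + (k : ℕ) = d + (k₂ : ℕ) :=
            congrArg (fun z : Fin (2*d) => (z : ℕ)) h6
          exact Fin.ext (by omega)
        have hτap : τ ⟨((π (emb2 k) : Fin (2*d)) : ℕ) - d,
            by have := (π (emb2 k)).isLt; omega⟩
            = ⟨((π (emb2 k) : Fin (2*d)) : ℕ) - d,
              by have := (π (emb2 k)).isLt; omega⟩ := by
          rw [hτ]
          exact Equiv.swap_apply_of_ne_of_ne ne1 ne2
        rw [hτap, splice_emb2, hb, Function.comp_apply, emb2_mk _ hm, hj,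
          Function.comp_apply, Equiv.symm_apply_apply, splice_emb2,
          Function.update_of_ne hk]
  rw [c1, c2, c3, c4] at key
  exact key

end Swaps2
section Core
open Aux
variable {n d : ℕ} (π : Equiv.Perm (Fin (2*d)))
variable {Y : (Fin (2*d) → Fin n) → ℂ} {u : (Fin d → Fin n) → ℂ}

lemma core (hn : 0 < n)
    (hM : ∀ p q : Fin d → Fin n, u p * conj (u q) = Y (splice p q ∘ ⇑π.symm))
    (hPS : cIsPS Y)
    (hScase : d = 1 ∨ ((∃ k : Fin d, ((π (emb1 k) : Fin (2*d)) : ℕ) < d) ∧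
        (∃ k : Fin d, ¬ ((π (emb1 k) : Fin (2*d)) : ℕ) < d)))
    (hπ : ∀ k : Fin d, (((π (emb1 k) : Fin (2*d)) : ℕ) < d) ↔
        ¬ ((π (emb2 k) : Fin (2*d)) : ℕ) < d)
    (hu : ∃ p₀, u p₀ ≠ 0) :
    ∃ x : Fin n → ℂ, ∀ p q : Fin d → Fin n,
      u p * conj (u q) = uof π x p * conj (uof π x q) := by
  classical
  rcases hScase with hd1 | ⟨⟨kS, cS⟩, ⟨kN, cN⟩⟩
  · -- case d = 1
    subst hd1
    by_cases hc : ((π (emb1 (0 : Fin 1)) : Fin (2*1)) : ℕ) < 1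
    · refine ⟨fun i => conj (u (fun _ => i)), fun p q => ?_⟩
      have huof : ∀ p : Fin 1 → Fin n, uof π (fun i => conj (u (fun _ => i))) p = u p := by
        intro p
        unfold uof
        rw [Fin.prod_univ_one, if_pos hc, Complex.conj_conj]
        congr 1
        funext k
        exact congrArg p (Subsingleton.elim _ _)
      rw [huof, huof]
    · refine ⟨fun i => u (fun _ => i), fun p q => ?_⟩
      have huof : ∀ p : Fin 1 → Fin n, uof π (fun i => u (fun _ => i)) p = u p := by
        intro p
        unfold uof
        rw [Fin.prod_univ_one, if_neg hc]
        have : u (fun _ => p 0) = u p := by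
          congr 1
          funext k
          exact congrArg p (Subsingleton.elim _ _)
        exact this
      rw [huof, huof]
  · -- main case
    obtain ⟨p₀, hp₀⟩ := hu
    have cN2 : ((π (emb2 kN) : Fin (2*d)) : ℕ) < d := by
      have := hπ kN; tauto
    have cS2 : ¬ ((π (emb2 kS) : Fin (2*d)) : ℕ) < d := (hπ kS).mp cS
    have hcu : conj (u p₀) ≠ 0 := by
      simpa using hp₀
    set c : ℂ := conj (u p₀) with hc
    -- basic objects
    set A : Fin n → ℂ := fun i => u (Function.update p₀ kS i) with hA
    set Nf : Fin n → ℂ := fun i => u (Function.update p₀ kN i) with hNf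
    set e : ℂ := conj (Nf (p₀ kS)) with he
    set G : Fin d → Fin n → ℂ := fun k i =>
      conj (u (Function.update p₀ (if ((π (emb1 k) : Fin (2*d)) : ℕ) < d then kN else kS) i))
      with hG
    set B : Fin d → Fin n := fun k =>
      if ((π (emb1 k) : Fin (2*d)) : ℕ) < d then p₀ kN else p₀ kS with hB
    -- one-slot identity
    have oneslot : ∀ (k : Fin d) (p : Fin d → Fin n),
        u p * c = u (Function.update p k (B k)) * G k (p k) := by
      intro k p
      by_cases hSk : ((π (emb1 k) : Fin (2*d)) : ℕ) < d
      · have hsw := swap1 π hM hPS k kN hSk cN2 p p₀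
        rw [hB, hG]
        simp only [if_pos hSk]
        exact hsw.symm
      · have hsw := swap2 π hM hPS k kS hSk cS2 p p₀
        rw [hB, hG]
        simp only [if_neg hSk]
        exact hsw.symm
    -- induction over finsets
    have FORMs : ∀ s : Finset (Fin d), ∀ p : Fin d → Fin n,
        u p * c ^ s.card
          = u (fun k => if k ∈ s then B k else p k) * ∏ k ∈ s, G k (p k) := by
      intro s
      induction s using Finset.induction_on with
      | empty =>
        intro p
        simp
      | insert k₀ s hk₀ ih =>
        intro p
        have hPins : Function.update (fun k => if k ∈ s then B k else p k) k₀ (B k₀)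
            = fun k => if k ∈ insert k₀ s then B k else p k := by
          funext k
          by_cases hkk : k = k₀
          · subst hkk
            rw [Function.update_self]
            simp
          · rw [Function.update_of_ne hkk]
            simp [hkk]
        have hPk₀ : (fun k => if k ∈ s then B k else p k) k₀ = p k₀ := by
          simp [hk₀]
        calc u p * c ^ (insert k₀ s).card
            = (u p * c ^ s.card) * c := by
              rw [Finset.card_insert_of_notMem hk₀]; ring
          _ = (u (fun k => if k ∈ s then B k else p k) * ∏ k ∈ s, G k (p k)) * c := by
              rw [ih p]
          _ = (u (fun k => if k ∈ s then B k else p k) * c) * ∏ k ∈ s, G k (p k) := by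
              ring
          _ = (u (Function.update (fun k => if k ∈ s then B k else p k) k₀ (B k₀))
                * G k₀ ((fun k => if k ∈ s then B k else p k) k₀)) * ∏ k ∈ s, G k (p k) := by
              rw [← oneslot k₀]
          _ = u (fun k => if k ∈ insert k₀ s then B k else p k)
                * (G k₀ (p k₀) * ∏ k ∈ s, G k (p k)) := by
              rw [hPins, hPk₀]; ring
          _ = _ := by rw [Finset.prod_insert hk₀]
    have FORM : ∀ p : Fin d → Fin n,
        u p * c ^ d = u B * ∏ k, G k (p k) := by
      intro p
      have := FORMs Finset.univ p
      simpa using this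
    -- REL
    have RELo : ∀ i : Fin n, u p₀ * conj (Nf i) = A i * e := by
      intro i
      have hsw := swap1 π hM hPS kS kN cS cN2
        (Function.update p₀ kS i) (Function.update p₀ kN (p₀ kS))
      -- rewrite the four updated functions
      rw [Function.update_idem, Function.update_idem, Function.update_self,
        Function.update_self] at hsw
      -- hsw : u (update p₀ kS (p₀ kS)) * conj (u (update p₀ kN i))
      --     = u (update p₀ kS i) * conj (u (update p₀ kN (p₀ kS)))
      rw [Function.update_eq_self] at hsw
      rw [hA, hNf, he, hNf]
      exact hsw
    -- M
    set M : (Fin d → Fin n) → ℂ := fun p =>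
      ∏ k, (if ((π (emb1 k) : Fin (2*d)) : ℕ) < d then A (p k) else conj (A (p k))) with hM'
    set a : ℕ := (Finset.univ.filter
      (fun k : Fin d => ((π (emb1 k) : Fin (2*d)) : ℕ) < d)).card with haa
    have hGM : ∀ p : Fin d → Fin n,
        (∏ k, G k (p k)) * (u p₀) ^ a = e ^ a * M p := by
      intro p
      have lhs : (∏ k, G k (p k)) * (u p₀) ^ a
          = ∏ k, (if ((π (emb1 k) : Fin (2*d)) : ℕ) < d
              then u p₀ * conj (Nf (p k)) else conj (A (p k))) := by
        have factor : ∀ k : Fin d,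
            (if ((π (emb1 k) : Fin (2*d)) : ℕ) < d
              then u p₀ * conj (Nf (p k)) else conj (A (p k)))
            = G k (p k) * (if ((π (emb1 k) : Fin (2*d)) : ℕ) < d then u p₀ else 1) := by
          intro k
          rw [hG, hNf, hA]
          split_ifs with hSk
          · simp only [if_pos hSk]; ring
          · simp only [if_neg hSk]; ring
        rw [Finset.prod_congr rfl (fun k _ => factor k), Finset.prod_mul_distrib]
        congr 1
        rw [Finset.prod_ite, Finset.prod_const, Finset.prod_const_one, mul_one, haa]
      have rhs : e ^ a * M p
          = ∏ k, (if ((π (emb1 k) : Fin (2*d)) : ℕ) < d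
              then A (p k) * e else conj (A (p k))) := by
        have factor : ∀ k : Fin d,
            (if ((π (emb1 k) : Fin (2*d)) : ℕ) < d
              then A (p k) * e else conj (A (p k)))
            = (if ((π (emb1 k) : Fin (2*d)) : ℕ) < d then A (p k) else conj (A (p k)))
              * (if ((π (emb1 k) : Fin (2*d)) : ℕ) < d then e else 1) := by
          intro k
          split_ifs with hSk <;> ring
        have hpow_e : ∏ k : Fin d,
            (if ((π (emb1 k) : Fin (2*d)) : ℕ) < d then e else (1:ℂ)) = e ^ a := by
          rw [Finset.prod_ite, Finset.prod_const, Finset.prod_const_one, mul_one, haa]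
        rw [Finset.prod_congr rfl (fun k _ => factor k), Finset.prod_mul_distrib, hpow_e, hM']
        ring
      rw [lhs, rhs]
      apply Finset.prod_congr rfl
      intro k _
      split_ifs with hSk
      · exact RELo (p k)
      · rfl
    -- combine
    have key : ∀ p : Fin d → Fin n,
        u p * (c ^ d * (u p₀) ^ a) = (u B * e ^ a) * M p := by
      intro p
      calc u p * (c ^ d * (u p₀) ^ a) = (u p * c ^ d) * (u p₀) ^ a := by ring
        _ = (u B * ∏ k, G k (p k)) * (u p₀) ^ a := by rw [FORM]
        _ = u B * ((∏ k, G k (p k)) * (u p₀) ^ a) := by ring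
        _ = u B * (e ^ a * M p) := by rw [hGM]
        _ = (u B * e ^ a) * M p := by ring
    set c1 : ℂ := c ^ d * (u p₀) ^ a with hc1
    set c2 : ℂ := u B * e ^ a with hc2
    have hc1ne : c1 ≠ 0 := by
      rw [hc1]
      exact mul_ne_zero (pow_ne_zero _ hcu) (pow_ne_zero _ hp₀)
    set K : ℂ := c2 / c1 with hK
    have key2 : ∀ p : Fin d → Fin n, u p = K * M p := by
      intro p
      rw [hK]
      field_simp
      linear_combination key p
    have hKne : K ≠ 0 := by
      intro h
      apply hp₀
      rw [key2 p₀, h, zero_mul]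
    -- define x
    set t : ℝ := ‖K‖ ^ ((d : ℝ)⁻¹) with ht
    set x : Fin n → ℂ := fun i => (t : ℂ) * conj (A i) with hx
    have huofx : ∀ p : Fin d → Fin n, uof π x p = (t : ℂ) ^ d * M p := by
      intro p
      unfold uof
      have factor : ∀ k : Fin d,
          (if ((π (emb1 k) : Fin (2*d)) : ℕ) < d then conj (x (p k)) else x (p k))
          = (t : ℂ) * (if ((π (emb1 k) : Fin (2*d)) : ℕ) < d
              then A (p k) else conj (A (p k))) := by
        intro k
        rw [hx]
        split_ifs with hSk
        · rw [map_mul, Complex.conj_conj, Complex.conj_ofReal]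
        · rfl
      rw [Finset.prod_congr rfl (fun k _ => factor k), Finset.prod_mul_distrib,
        Finset.prod_const, Finset.card_univ, Fintype.card_fin, hM']
    -- the constant computation
    have habs : ((t : ℂ) ^ d) * conj ((t : ℂ) ^ d) = K * conj K := by
      have h1 : conj ((t : ℂ) ^ d) = (t : ℂ) ^ d := by
        rw [map_pow, Complex.conj_ofReal]
      have h2 : t ^ d * t ^ d = ‖K‖ ^ 2 := by
        rw [ht, ← Real.rpow_natCast (‖K‖ ^ ((d : ℝ)⁻¹)) d,
          ← Real.rpow_mul (norm_nonneg K),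
          ← Real.rpow_add (norm_pos_iff.mpr hKne)]
        have hd0 : (d : ℝ) ≠ 0 := by
          have : 0 < d := kS.pos
          positivity
        have h25 : (d : ℝ)⁻¹ * (d : ℝ) + (d : ℝ)⁻¹ * (d : ℝ) = 2 := by
          field_simp
          norm_num
        rw [h25]
        rw [show (2 : ℝ) = ((2 : ℕ) : ℝ) by norm_num, Real.rpow_natCast]
      have h3 : t ^ d * t ^ d = Complex.normSq K := by
        rw [h2, Complex.sq_norm]
      rw [h1, Complex.mul_conj, ← Complex.ofReal_pow, ← Complex.ofReal_mul, h3]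
    refine ⟨x, fun p q => ?_⟩
    rw [key2 p, key2 q, huofx p, huofx q, map_mul, map_mul]
    calc K * M p * (conj K * conj (M q))
        = (K * conj K) * (M p * conj (M q)) := by ring
      _ = ((t : ℂ) ^ d * conj ((t : ℂ) ^ d)) * (M p * conj (M q)) := by rw [habs]
      _ = (t : ℂ) ^ d * M p * (conj ((t : ℂ) ^ d) * conj (M q)) := by ring
end Core
section RankOne
open Module
variable {N : Type*} [Fintype N] [DecidableEq N]

lemma outer_rank_one (u : N → ℂ) (hu : ∃ p₀, u p₀ ≠ 0) :
    (Matrix.of fun p q => u p * conj (u q)).rank = 1 := by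
  classical
  obtain ⟨p₀, hp₀⟩ := hu
  set X : Matrix N N ℂ := Matrix.of fun p q => u p * conj (u q) with hX
  have hcol : ∀ y : N → ℂ, X.mulVec y = (∑ q, conj (u q) * y q) • u := by
    intro y
    funext p
    show ∑ q, X p q * y q = (∑ q, conj (u q) * y q) * u p
    calc ∑ q, X p q * y q = ∑ q, u p * (conj (u q) * y q) := by
          apply Finset.sum_congr rfl; intro q _
          show (u p * conj (u q)) * y q = _
          ring
      _ = u p * ∑ q, conj (u q) * y q := by rw [← Finset.mul_sum]
      _ = _ := by ring
  have hle : LinearMap.range X.mulVecLin ≤ Submodule.span ℂ {u} := by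
    rintro w ⟨y, rfl⟩
    rw [Matrix.mulVecLin_apply, hcol]
    exact Submodule.smul_mem _ _ (Submodule.mem_span_singleton_self u)
  have hu0 : u ≠ 0 := by
    intro h
    apply hp₀
    rw [h]
    rfl
  have hup : X.rank ≤ 1 := by
    have h2 : finrank ℂ (LinearMap.range X.mulVecLin) ≤ finrank ℂ (Submodule.span ℂ {u}) :=
      Submodule.finrank_mono hle
    have h3 : finrank ℂ (Submodule.span ℂ {u}) = 1 := finrank_span_singleton hu0
    calc X.rank = finrank ℂ (LinearMap.range X.mulVecLin) := rfl
      _ ≤ finrank ℂ (Submodule.span ℂ {u}) := h2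
      _ ≤ 1 := h3.le
  have hdown : X.rank ≠ 0 := by
    intro h0
    have hbot : LinearMap.range X.mulVecLin = ⊥ := Submodule.finrank_eq_zero.mp h0
    have hmem : X.mulVec (Pi.single p₀ 1) ∈ LinearMap.range X.mulVecLin :=
      ⟨Pi.single p₀ 1, rfl⟩
    rw [hbot, Submodule.mem_bot] at hmem
    have := congrFun hmem p₀
    rw [hcol] at this
    have hs : (∑ q, conj (u q) * (Pi.single p₀ 1 : N → ℂ) q) = conj (u p₀) := by
      rw [Finset.sum_eq_single p₀]
      · rw [Pi.single_eq_same, mul_one]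
      · intro b _ hb
        rw [Pi.single_eq_of_ne hb, mul_zero]
      · intro hb
        exact absurd (Finset.mem_univ p₀) hb
    rw [Pi.smul_apply, hs, smul_eq_mul, Pi.zero_apply] at this
    rcases mul_eq_zero.mp this with h | h
    · exact hp₀ (by simpa using h)
    · exact hp₀ h
  omega
end RankOne
section Main
open Aux

lemma sum_xconj {n : ℕ} (x : Fin n → ℂ) :
    (∑ i, x i * conj (x i)) = ((∑ i, Complex.normSq (x i) : ℝ) : ℂ) := by
  push_cast
  apply Finset.sum_congr rfl
  intro i _
  rw [Complex.mul_conj]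

/-- For a CPS tensor `T` and a permutation `π` with (i) for every `k ∈ {1,…,d}`
exactly one of `π_k, π_{d+k}` in `{1,…,d}`, and (ii) `⌊d/2⌋ ≤ |{π₁,…,π_d} ∩ {1,…,d}| ≤ ⌈d/2⌉`:
the maximum of the conjugate form `T(conj(x)^d x^d)` over the unit sphere equals the
maximum of `Re⟨conj(M_π(T)), X⟩` over Hermitian `X` with trace one, matrix rank one,
and `X = M_π(Y)` for some CPS tensor `Y`. -/
theorem stmt17 {n d : ℕ} (hn : 0 < n) (hd : 0 < d)
    (T : (Fin (2 * d) → Fin n) → ℂ) (hT : cIsCPS T)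
    (π : Equiv.Perm (Fin (2 * d)))
    (hπ : ∀ k : Fin d,
      (((π ⟨(k : ℕ), by have := k.isLt; omega⟩ : Fin (2 * d)) : ℕ) < d) ↔
      ¬ (((π ⟨d + (k : ℕ), by have := k.isLt; omega⟩ : Fin (2 * d)) : ℕ) < d))
    (hπ₁ : d / 2 ≤ (Finset.univ.filter (fun k : Fin d =>
      ((π ⟨(k : ℕ), by have := k.isLt; omega⟩ : Fin (2 * d)) : ℕ) < d)).card)
    (hπ₂ : (Finset.univ.filter (fun k : Fin d =>
      ((π ⟨(k : ℕ), by have := k.isLt; omega⟩ : Fin (2 * d)) : ℕ) < d)).card ≤ (d + 1) / 2) :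
    sSup {v : ℝ | ∃ x : Fin n → ℂ, (∑ i, Complex.normSq (x i)) = 1 ∧
        v = (∑ p : Fin d → Fin n, ∑ q : Fin d → Fin n,
          T (splice p q) * ((∏ k, conj (x (p k))) * ∏ k, x (q k))).re}
      = sSup {v : ℝ | ∃ X : Matrix (Fin d → Fin n) (Fin d → Fin n) ℂ,
        X.IsHermitian ∧ X.trace = 1 ∧ X.rank = 1 ∧
        (∃ Y : (Fin (2 * d) → Fin n) → ℂ, cIsCPS Y ∧ X = pmat π Y) ∧
        v = (∑ p : Fin d → Fin n, ∑ q : Fin d → Fin n, pmat π T p q * X p q).re} := by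
  classical
  have hπ' : ∀ k : Fin d, (((π (emb1 k) : Fin (2*d)) : ℕ) < d) ↔
      ¬ ((π (emb2 k) : Fin (2*d)) : ℕ) < d := fun k => hπ k
  congr 1
  ext v
  simp only [Set.mem_setOf_eq]
  constructor
  · -- forward
    rintro ⟨x, hx1, hx2⟩
    have hxc : (∑ i, x i * conj (x i)) = 1 := by
      rw [sum_xconj, hx1, Complex.ofReal_one]
    have hxu : ∃ p₀ : Fin d → Fin n, uof π x p₀ ≠ 0 := by
      obtain ⟨i₀, hi₀⟩ : ∃ i₀, x i₀ ≠ 0 := by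
        by_contra h
        push_neg at h
        rw [show (∑ i, Complex.normSq (x i)) = 0 from
          Finset.sum_eq_zero fun i _ => by rw [h i]; simp] at hx1
        norm_num at hx1
      refine ⟨fun _ => i₀, ?_⟩
      unfold uof
      rw [Finset.prod_ne_zero_iff]
      intro k _
      split_ifs with hSk
      · simpa using hi₀
      · exact hi₀
    refine ⟨Matrix.of fun p q => uof π x p * conj (uof π x q), ?_, ?_, ?_,
      ⟨Y0 x, Y0_CPS x, ?_⟩, ?_⟩
    · show Matrix.conjTranspose (Matrix.of fun p q => uof π x p * conj (uof π x q))
        = Matrix.of fun p q => uof π x p * conj (uof π x q)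
      ext p q
      show conj (uof π x q * conj (uof π x p)) = uof π x p * conj (uof π x q)
      rw [map_mul, Complex.conj_conj]
      ring
    · show (∑ p, uof π x p * conj (uof π x p)) = 1
      rw [trace_uof π x, hxc, one_pow]
    · exact outer_rank_one (uof π x) hxu
    · ext p q
      show uof π x p * conj (uof π x q) = Y0 x (splice p q ∘ ⇑π.symm)
      exact (PROD π hπ' x p q).symm
    · rw [hx2]
      congr 1
      exact (VALUE π hπ' T x).symm
  · -- reverse
    rintro ⟨X, hH, htr, hrk, ⟨Y, hYCPS, hXY⟩, hv⟩
    obtain ⟨u, hu⟩ := rank_one_decomp X hH htr hrk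
    have hMeq : ∀ p q : Fin d → Fin n,
        u p * conj (u q) = Y (splice p q ∘ ⇑π.symm) := by
      intro p q
      rw [← hu p q, hXY]
      rfl
    have hune : ∃ p₀, u p₀ ≠ 0 := by
      by_contra h
      push_neg at h
      have : X.trace = 0 := by
        show (∑ p, X p p) = 0
        apply Finset.sum_eq_zero
        intro p _
        rw [hu p p, h p, zero_mul]
      rw [htr] at this
      exact one_ne_zero this
    have hScase : d = 1 ∨ ((∃ k : Fin d, ((π (emb1 k) : Fin (2*d)) : ℕ) < d) ∧
        (∃ k : Fin d, ¬ ((π (emb1 k) : Fin (2*d)) : ℕ) < d)) := by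
      by_cases hd1 : d = 1
      · exact Or.inl hd1
      · right
        have hd2 : 2 ≤ d := by omega
        have hcard : (Finset.univ.filter (fun k : Fin d =>
            ((π (emb1 k) : Fin (2*d)) : ℕ) < d)).card
            = (Finset.univ.filter (fun k : Fin d =>
            ((π ⟨(k : ℕ), by have := k.isLt; omega⟩ : Fin (2 * d)) : ℕ) < d)).card := rfl
        constructor
        · have hpos : 0 < (Finset.univ.filter (fun k : Fin d =>
              ((π (emb1 k) : Fin (2*d)) : ℕ) < d)).card := by
            rw [hcard]
            calc 0 < d / 2 := by omega
              _ ≤ _ := hπ₁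
          obtain ⟨k, hk⟩ := Finset.card_pos.mp hpos
          exact ⟨k, (Finset.mem_filter.mp hk).2⟩
        · have hsplit := Finset.card_filter_add_card_filter_not
            (s := (Finset.univ : Finset (Fin d)))
            (p := fun k : Fin d => ((π (emb1 k) : Fin (2*d)) : ℕ) < d)
          rw [Finset.card_univ, Fintype.card_fin] at hsplit
          have hpos : 0 < (Finset.univ.filter (fun k : Fin d =>
              ¬ ((π (emb1 k) : Fin (2*d)) : ℕ) < d)).card := by
            have h2 := hπ₂
            rw [← hcard] at h2
            omega
          obtain ⟨k, hk⟩ := Finset.card_pos.mp hpos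
          exact ⟨k, (Finset.mem_filter.mp hk).2⟩
    obtain ⟨x, hxeq⟩ := core π hn hMeq hYCPS.1 hScase hπ' hune
    -- normalization
    set s : ℝ := ∑ i, Complex.normSq (x i) with hs
    have hsnn : 0 ≤ s := Finset.sum_nonneg fun i _ => Complex.normSq_nonneg _
    have htrs : ((s : ℂ)) ^ d = 1 := by
      have h1 : X.trace = ∑ p, uof π x p * conj (uof π x p) := by
        show (∑ p, X p p) = _
        apply Finset.sum_congr rfl
        intro p _
        rw [hu p p, hxeq p p]
      rw [h1, trace_uof π x, sum_xconj, ← hs] at htr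
      exact htr
    have hs1 : s = 1 := by
      have hpow : s ^ d = 1 := by
        have := htrs
        rw [← Complex.ofReal_pow] at this
        exact_mod_cast this
      rcases lt_trichotomy s 1 with h | h | h
      · exfalso
        have : s ^ d < 1 := pow_lt_one₀ hsnn h (by omega)
        rw [hpow] at this
        norm_num at this
      · exact h
      · exfalso
        have : 1 < s ^ d := one_lt_pow₀ h (by omega)
        rw [hpow] at this
        norm_num at this
    refine ⟨x, by rw [← hs]; exact hs1, ?_⟩
    rw [hv]
    congr 1
    calc ∑ p : Fin d → Fin n, ∑ q : Fin d → Fin n, pmat π T p q * X p q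
        = ∑ p : Fin d → Fin n, ∑ q : Fin d → Fin n,
            pmat π T p q * (uof π x p * conj (uof π x q)) := by
          apply Finset.sum_congr rfl; intro p _
          apply Finset.sum_congr rfl; intro q _
          rw [hu p q, hxeq p q]
      _ = _ := VALUE π hπ' T x

end Main
end
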